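/- arXiv:0803.1283 — 2 statements merged into one kernel-verified Lean document; each statement's English description precedes it below -/
import Mathlib

section
/- Let X be a Banach space, F ∈ 𝓕_X, t, l > 0, and Φ ⊂ X a set. Assume there is an increasing sequence (g_k) of natural numbers such that the weak limit w-lim_{k→∞} F(t/g_k)^{[g_k s]} g exists for every g ∈ Φ and every rational s ∈ [0, l). Then this weak limit exists for every g in the closed linear span of Φ and every real s ∈ [0, l), and the operators T_s g := w-lim_{k→∞} F(t/g_k)^{[g_k s/t]} g on the closed span of Φ satisfy: (a) T_s is linear and there exist M ≥ 1, a ∈ ℝ with ‖T_s g‖ ≤ M·exp(a·s)·‖g‖; (b) s ↦ T_s g is norm-continuous on [0, l); (c) if f lies in the closed span of Φ, f ∈ D(F'(0)) and F'(0)f lies in the closed span of Φ, then d/ds(T_s f) = T_s F'(0)f on [0, l); (d) if φ ∈ D((F*)'(0)), then (T_m f, φ) − (T_p f, φ) = ∫_p^m (T_s f, (F*)'(0)φ) ds for m, p ∈ [0, l) and f in the closed span of Φ; (e) if φ ∈ D((F*)'(0)), then d/ds (T_s f, φ) = (T_s f, (F*)'(0)φ); (f) if moreover D((F*)'(0)) is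 weak*-dense in X* and f is as in (c), then T_s f ∈ D(((F*)'(0))*) for s ∈ [0, l), D(((F*)'(0))*) ⊇ D(F'(0)) with ((F*)'(0))* f = F'(0)f, and d/ds(T_s f) = ((F*)'(0))* T_s f for all s ∈ [0, l). -/
open Filter Topology MeasureTheory

noncomputable section

variable {X : Type*} [NormedAddCommGroup X] [NormedSpace ℝ X] [CompleteSpace X]

/-- `y` is the value of the strong derivative at `0` of `F : [0,∞) → L(X)` at `ψ`. -/
def DerivAtZero (F : ℝ → (X →L[ℝ] X)) (ψ y : X) : Prop :=
  Tendsto (fun h : ℝ => h⁻¹ • (F h ψ - F 0 ψ)) (𝓝[>] (0 : ℝ)) (𝓝 y)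

/-- The class `𝓕^X_{M,a}`. -/
def MemFClass (F : ℝ → (X →L[ℝ] X)) (M a : ℝ) : Prop :=
  F 0 = 1 ∧
    (∀ n m : ℕ, 0 < n → 0 < m → ∀ s : ℝ, 0 ≤ s →
      ‖(F (s / n)) ^ m‖ ≤ M * Real.exp (a * m * s / n)) ∧
    Dense {ψ : X | ∃ y, DerivAtZero F ψ y}

/-- The class `𝓕_X`. -/
def MemF (F : ℝ → (X →L[ℝ] X)) : Prop := ∃ M, 1 ≤ M ∧ ∃ a : ℝ, MemFClass F M a

/-- The adjoint of a bounded operator, acting on the dual space. -/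
noncomputable def adjCLM (T : X →L[ℝ] X) :
    StrongDual ℝ X →L[ℝ] StrongDual ℝ X :=
  LinearMap.mkContinuous
    { toFun := fun φ => φ.comp T
      map_add' := fun φ ψ => by ext x; simp
      map_smul' := fun c φ => by ext x; simp }
    ‖T‖ (fun φ => by simpa [mul_comm] using φ.opNorm_comp_le T)

/-- `ψ` is the value at `φ` of the strong derivative at `0` of `s ↦ F(s)*`. -/
def AdjDerivAtZero (F : ℝ → (X →L[ℝ] X)) (φ ψ : StrongDual ℝ X) : Prop :=
  Tendsto (fun h : ℝ => h⁻¹ • (adjCLM (F h) φ - adjCLM (F 0) φ)) (𝓝[>] (0 : ℝ)) (𝓝 ψ)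

/-- A `C₀`-semigroup on `X` (as a function on `[0,∞)`, modelled on all of `ℝ`). -/
def IsC0Semigroup (S : ℝ → (X →L[ℝ] X)) : Prop :=
  S 0 = 1 ∧ (∀ a b : ℝ, 0 ≤ a → 0 ≤ b → S (a + b) = S a * S b) ∧
    (∀ x : X, ContinuousOn (fun s => S s x) (Set.Ici (0 : ℝ))) ∧
    ∃ M, 1 ≤ M ∧ ∃ w : ℝ, ∀ s : ℝ, 0 ≤ s → ‖S s‖ ≤ M * Real.exp (w * s)

/-- `Z` is the generator of the semigroup `S`: the strong derivative of `S` at `0`,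
with its maximal domain, coincides with `Z`. -/
def IsGeneratorOf (S : ℝ → (X →L[ℝ] X)) (Z : X →ₗ.[ℝ] X) : Prop :=
  ∀ x y : X, DerivAtZero S x y ↔ ∃ hx : x ∈ Z.domain, Z ⟨x, hx⟩ = y

/-- Every subsequence of `u` has a weakly convergent subsubsequence. -/
def WeakSubCvg (u : ℕ → X) : Prop :=
  ∀ k : ℕ → ℕ, StrictMono k → ∃ j : ℕ → ℕ, StrictMono j ∧ ∃ L : X,
    ∀ φ : StrongDual ℝ X, Tendsto (fun i => φ (u (k (j i)))) atTop (𝓝 (φ L))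

/-- `(f, y)` belongs to the closure of the graph of `F'(0)`. -/
def InClosureGraphF (F : ℝ → (X →L[ℝ] X)) (f y : X) : Prop :=
  (f, y) ∈ closure {p : X × X | DerivAtZero F p.1 p.2}

/-- The closed linear span of a set. -/
def closedSpan (Φ : Set X) : Submodule ℝ X := (Submodule.span ℝ Φ).topologicalClosure

/-- `y` is a value at `x` of the adjoint `((F*)'(0))*` (restricted to `X`). -/
def AdjAdjRel (F : ℝ → (X →L[ℝ] X)) (x y : X) : Prop :=
  ∀ φ ψ : StrongDual ℝ X, AdjDerivAtZero F φ ψ → ψ x = φ y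

/-!
Write `A_h(σ) = F(h)^⌊σ/h⌋` for the Chernoff step function, so that `F(t/n)^⌊n s⌋ = A_{t/n}(s t)`.
The bounds `‖F(h)^m‖ ≤ M e^{a m h}` make `A_h(σ)` uniformly bounded for `σ` in compact sets, and
the telescoping identity `A_h(r) - A_h(p) = (∑_{⌊p/h⌋ ≤ j < ⌊r/h⌋} F(h)^j) (F(h) - 1)` shows that
`‖A_h(r) f - A_h(p) f‖ ≲ r - p + h` for `f ∈ D(F'(0))`; by density of `D(F'(0))` the maps
`σ ↦ A_h(σ) g` are equicontinuous up to an error vanishing with `h`. Hence weak limits extend from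
`Φ` and rational times to the closed span and all times in `[0, l)` (the limits along the
approximations form a Cauchy sequence), and the limit `T` is continuous in `s`.

Multiplied by `h`, the same telescoping sum is a Riemann sum of the step function `A_h`, tested
either against `h⁻¹ (F(h) f - f) → F'(0) f` or, through the adjoint, against
`h⁻¹ (F(h)* φ - φ) → (F*)'(0) φ`. Dominated convergence turns it into `∫_p^r T_σ F'(0) f dσ`,
respectively `∫_p^r ((F*)'(0) φ)(T_σ f) dσ`; (c)–(f) then follow from the fundamental theorem of
calculus and uniqueness of derivatives.
-/

variable {E : Type*} [NormedAddCommGroup E] [NormedSpace ℝ E]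

def WeakTendsto (u : ℕ → E) (L : E) : Prop :=
  ∀ φ : StrongDual ℝ E, Tendsto (fun k => φ (u k)) atTop (𝓝 (φ L))

namespace WeakTendsto

variable {u v : ℕ → E} {L L' : E}

theorem add (hu : WeakTendsto u L) (hv : WeakTendsto v L') :
    WeakTendsto (fun k => u k + v k) (L + L') := fun φ => by
  simpa only [map_add] using (hu φ).add (hv φ)

theorem sub (hu : WeakTendsto u L) (hv : WeakTendsto v L') :
    WeakTendsto (fun k => u k - v k) (L - L') := fun φ => by
  simpa only [map_sub] using (hu φ).sub (hv φ)

theorem const_smul (hu : WeakTendsto u L) (c : ℝ) :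
    WeakTendsto (fun k => c • u k) (c • L) := fun φ => by
  simpa only [map_smul, smul_eq_mul] using (hu φ).const_mul c

theorem unique (hu : WeakTendsto u L) (hu' : WeakTendsto u L') : L = L' :=
  SeparatingDual.eq_iff_forall_dual_eq.2 fun φ => tendsto_nhds_unique (hu φ) (hu' φ)

theorem norm_le (hu : WeakTendsto u L) {C : ℝ} (hC : ∀ᶠ k in atTop, ‖u k‖ ≤ C) : ‖L‖ ≤ C := by
  obtain ⟨k, hk⟩ := hC.exists
  refine NormedSpace.norm_le_dual_bound ℝ L ((norm_nonneg _).trans hk) fun φ => ?_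
  refine le_of_tendsto (hu φ).norm (hC.mono fun k hk => ?_)
  calc ‖φ (u k)‖ ≤ ‖φ‖ * ‖u k‖ := φ.le_opNorm _
    _ ≤ C * ‖φ‖ := by rw [mul_comm]; gcongr

end WeakTendsto

theorem exists_weakTendsto_of_approx [CompleteSpace E] {u : ℕ → E}
    (happrox : ∀ ε > 0, ∃ v L, WeakTendsto v L ∧ ∀ᶠ k in atTop, ‖u k - v k‖ ≤ ε) :
    ∃ L, WeakTendsto u L := by
  choose v L hvL huv using fun j : ℕ => happrox (1 / (j + 1)) Nat.one_div_pos_of_nat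
  have hδ : Tendsto (fun j : ℕ => (1 : ℝ) / (j + 1)) atTop (𝓝 0) :=
    tendsto_one_div_add_atTop_nhds_zero_nat
  have hdist : ∀ i j, ‖L i - L j‖ ≤ 1 / (i + 1) + 1 / (j + 1) := fun i j =>
    ((hvL i).sub (hvL j)).norm_le <| ((huv i).and (huv j)).mono fun k hk => by
      calc ‖v i k - v j k‖ = ‖(u k - v j k) - (u k - v i k)‖ := by congr 1; abel
        _ ≤ ‖u k - v j k‖ + ‖u k - v i k‖ := norm_sub_le _ _
        _ ≤ 1 / (i + 1) + 1 / (j + 1) := by linarith [hk.1, hk.2]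
  have hcauchy : CauchySeq L := by
    refine Metric.cauchySeq_iff'.2 fun ε hε => ?_
    obtain ⟨N, hN⟩ := (hδ.eventually (gt_mem_nhds (half_pos hε))).exists_forall_of_atTop
    refine ⟨N, fun n hn => ?_⟩
    rw [dist_eq_norm]
    linarith [hdist n N, hN n hn, hN N le_rfl]
  obtain ⟨L₀, hL₀⟩ := cauchySeq_tendsto_of_complete hcauchy
  refine ⟨L₀, fun φ => Metric.tendsto_nhds.2 fun ε hε => ?_⟩
  have hsmall : Tendsto (fun j : ℕ => ‖φ‖ * (1 / (j + 1) + ‖L j - L₀‖)) atTop (𝓝 0) := by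
    simpa using (hδ.add (tendsto_iff_norm_sub_tendsto_zero.1 hL₀)).const_mul ‖φ‖
  obtain ⟨j, hj⟩ := (hsmall.eventually (gt_mem_nhds (half_pos hε))).exists
  filter_upwards [huv j, Metric.tendsto_nhds.1 (hvL j φ) _ (half_pos hε)] with k hk hk'
  rw [Real.dist_eq] at hk' ⊢
  have h₁ : |φ (u k - v j k)| ≤ ‖φ‖ * (1 / (j + 1)) :=
    (φ.le_opNorm _).trans (mul_le_mul_of_nonneg_left hk (norm_nonneg φ))
  have h₂ : |φ (L j - L₀)| ≤ ‖φ‖ * ‖L j - L₀‖ := φ.le_opNorm _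
  rw [map_sub] at h₁ h₂
  rw [mul_add] at hj
  linarith [abs_sub_le (φ (u k)) (φ (v j k)) (φ L₀), abs_sub_le (φ (v j k)) (φ (L j)) (φ L₀)]

theorem tendsto_dual_apply_sub_of_bounded {P : ℕ → E →L[ℝ] E} {C : ℝ}
    (hP : ∀ᶠ k in atTop, ‖P k‖ ≤ C) {χ : ℕ → StrongDual ℝ E} {χ₀ : StrongDual ℝ E}
    (hχ : Tendsto χ atTop (𝓝 χ₀)) {z : ℕ → E} {z₀ : E} (hz : Tendsto z atTop (𝓝 z₀)) :
    Tendsto (fun k => χ k (P k (z k)) - χ₀ (P k z₀)) atTop (𝓝 0) := by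
  have hχ0 := tendsto_iff_norm_sub_tendsto_zero.1 hχ
  have hz0 := tendsto_iff_norm_sub_tendsto_zero.1 hz
  refine squeeze_zero_norm' (hP.mono fun k hPk => ?_)
    (by simpa using (hχ0.mul (hz.norm.const_mul C)).add ((hz0.const_mul C).const_mul ‖χ₀‖))
  have hsplit : χ k (P k (z k)) - χ₀ (P k z₀) = (χ k - χ₀) (P k (z k)) + χ₀ (P k (z k - z₀)) := by
    simp only [map_sub, sub_apply]; abel
  rw [hsplit]
  refine (norm_add_le _ _).trans (add_le_add ?_ ?_)
  · exact ((χ k - χ₀).le_opNorm _).trans (by gcongr; exact (P k).le_of_opNorm_le hPk _)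
  · exact (χ₀.le_opNorm _).trans (by gcongr; exact (P k).le_of_opNorm_le hPk _)

theorem norm_apply_sub_apply_le {P Q : E →L[ℝ] E} {B : ℝ} (hP : ‖P‖ ≤ B) (hQ : ‖Q‖ ≤ B)
    (g f : E) : ‖P g - Q g‖ ≤ ‖P f - Q f‖ + 2 * B * ‖g - f‖ := by
  have hsplit : P g - Q g = (P f - Q f) + (P (g - f) - Q (g - f)) := by
    simp only [map_sub]; abel
  rw [hsplit]
  refine (norm_add_le _ _).trans (add_le_add le_rfl ((norm_sub_le _ _).trans ?_))
  linarith [P.le_of_opNorm_le hP (g - f), Q.le_of_opNorm_le hQ (g - f)]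

theorem adjCLM_apply (T : E →L[ℝ] E) (φ : StrongDual ℝ E) (x : E) : adjCLM T φ x = φ (T x) :=
  rfl

theorem adjAdjRel_of_derivAtZero {F : ℝ → E →L[ℝ] E} {g z : E} (hgz : DerivAtZero F g z) :
    AdjAdjRel F g z := by
  intro φ ψ hφψ
  refine tendsto_nhds_unique (((ContinuousLinearMap.apply ℝ ℝ g).continuous.tendsto ψ).comp hφψ)
    (((φ.continuous.tendsto z).comp hgz).congr fun r => ?_)
  simp [adjCLM_apply]

theorem hasDerivWithinAt_Ico_of_eq_integral [CompleteSpace E] {u v : ℝ → E} {a b s : ℝ}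
    (hv : ContinuousOn v (Set.Ico a b)) (huv : ∀ r ∈ Set.Ico a b, u r = u a + ∫ σ in a..r, v σ)
    (hs : s ∈ Set.Ico a b) : HasDerivWithinAt u (v s) (Set.Ico a b) s := by
  obtain ⟨b', hsb', hb'b⟩ := exists_between hs.2
  have hsub : Set.Icc a b' ⊆ Set.Ico a b := Set.Icc_subset_Ico_right hb'b
  have : Fact (s ∈ Set.Icc a b') := ⟨⟨hs.1, hsb'.le⟩⟩
  have hftc := intervalIntegral.integral_hasDerivWithinAt_right (s := Set.Icc a b')
    ((hv.mono (Set.Icc_subset_Ico_right (hsb'.trans hb'b))).intervalIntegrable_of_Icc hs.1)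
    ((hv.mono hsub).stronglyMeasurableAtFilter_nhdsWithin measurableSet_Icc s)
    ((hv s hs).mono hsub)
  refine ((hftc.const_add (u a)).mono_of_mem_nhdsWithin ?_).congr huv (huv s hs)
  exact mem_nhdsWithin.2 ⟨Set.Iio b', isOpen_Iio, hsb', fun x hx => ⟨hx.2.1, hx.1.le⟩⟩

theorem tendsto_div_natCast_nhdsGT_zero {t : ℝ} (ht : 0 < t) {n : ℕ → ℕ} (hn : StrictMono n) :
    Tendsto (fun k => t / (n k : ℝ)) atTop (𝓝[>] 0) := by
  have hn' := (tendsto_natCast_atTop_atTop (R := ℝ)).comp hn.tendsto_atTop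
  refine tendsto_nhdsWithin_iff.2 ⟨tendsto_const_nhds.div_atTop hn', ?_⟩
  filter_upwards [hn'.eventually_gt_atTop 0] with k hk using div_pos ht hk

theorem Set.Ico_subset_closure_inter_range_ratCast (a b : ℝ) :
    Set.Ico a b ⊆ closure (Set.Ico a b ∩ Set.range ((↑) : ℚ → ℝ)) := by
  intro s hs
  have hIoo : Set.Ioo a b ⊆ closure (Set.Ico a b ∩ Set.range ((↑) : ℚ → ℝ)) :=
    ((Rat.denseRange_cast (𝕜 := ℝ)).open_subset_closure_inter isOpen_Ioo).trans
      (closure_mono (Set.inter_subset_inter_left _ Set.Ioo_subset_Ico_self))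
  exact closure_minimal hIoo isClosed_closure <|
    (closure_Ioo (hs.1.trans_lt hs.2).ne).symm ▸ Set.Ico_subset_Icc_self hs

def chernoffStep (F : ℝ → E →L[ℝ] E) (h σ : ℝ) : E →L[ℝ] E := F h ^ ⌊σ / h⌋₊

def chernoffSum (F : ℝ → E →L[ℝ] E) (h p r : ℝ) : E →L[ℝ] E :=
  ∑ j ∈ Finset.Ico ⌊p / h⌋₊ ⌊r / h⌋₊, F h ^ j

theorem natFloor_div_mul_le {σ c h : ℝ} (hσc : σ ≤ c) (hc : 0 ≤ c) (hh : 0 ≤ h) :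
    (⌊σ / h⌋₊ : ℝ) * h ≤ c := by
  rcases hh.eq_or_lt with rfl | hh
  · simpa using hc
  rw [← le_div_iff₀ hh]
  exact (Nat.cast_le.2 (Nat.floor_le_floor (by gcongr))).trans (Nat.floor_le (by positivity))

theorem sub_lt_natFloor_div_mul (σ : ℝ) {h : ℝ} (hh : 0 < h) : σ - h < ⌊σ / h⌋₊ * h := by
  have := Nat.lt_floor_add_one (σ / h)
  rw [div_lt_iff₀ hh] at this
  linarith

theorem natFloor_div_le_natFloor_div {p r h : ℝ} (hpr : p ≤ r) (hh : 0 ≤ h) :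
    ⌊p / h⌋₊ ≤ ⌊r / h⌋₊ :=
  Nat.floor_le_floor (div_le_div_of_nonneg_right hpr hh)

theorem intervalIntegral_comp_natFloor_div [CompleteSpace E] (g : ℕ → E) {h : ℝ} (hh : 0 < h)
    {m n : ℕ} (hmn : m ≤ n) :
    ∫ σ in m * h..n * h, g ⌊σ / h⌋₊ = h • ∑ j ∈ Finset.Ico m n, g j := by
  have hpiece : ∀ j : ℕ, Set.EqOn (fun σ => g ⌊σ / h⌋₊) (fun _ => g j)
      (Set.uIoo (j * h) ((j + 1 : ℕ) * h)) := by
    intro j σ hσ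
    rw [Set.uIoo_of_le (by gcongr; omega)] at hσ
    simp only
    rw [Nat.floor_eq_on_Ico j (σ / h) ⟨(le_div_iff₀ hh).2 hσ.1.le, (div_lt_iff₀ hh).2 ?_⟩]
    exact_mod_cast hσ.2
  rw [← intervalIntegral.sum_integral_adjacent_intervals_Ico (a := fun j : ℕ => j * h) hmn
    fun j _ => intervalIntegrable_const.congr_uIoo (hpiece j).symm, Finset.smul_sum]
  refine Finset.sum_congr rfl fun j _ => ?_
  rw [intervalIntegral.integral_congr_uIoo (hpiece j), intervalIntegral.integral_const]
  push_cast
  ring_nf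

section ChernoffStep

variable (F : ℝ → E →L[ℝ] E)

theorem chernoffStep_sub_chernoffStep {h p r : ℝ} (hh : 0 ≤ h) (hpr : p ≤ r) :
    chernoffStep F h r - chernoffStep F h p = chernoffSum F h p r * (F h - 1) :=
  (geom_sum_Ico_mul (F h) (natFloor_div_le_natFloor_div hpr hh)).symm

theorem commute_chernoffSum (h p r : ℝ) : Commute (F h - 1) (chernoffSum F h p r) :=
  .sum_right _ _ _ fun j _ => ((Commute.refl _).sub_left (.one_left _)).pow_right j

theorem measurable_dual_chernoffStep_apply (h : ℝ) (χ : StrongDual ℝ E) (z : E) :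
    Measurable fun σ => χ (chernoffStep F h σ z) :=
  (measurable_from_nat (f := fun j : ℕ => χ ((F h ^ j) z))).comp
    (Nat.measurable_floor.comp (measurable_id.div_const h))

theorem dual_smul_chernoffSum_apply_eq_integral {h p r : ℝ} (hh : 0 < h) (hpr : p ≤ r)
    (χ : StrongDual ℝ E) (z : E) :
    χ ((h • chernoffSum F h p r) z) =
      ∫ σ in ⌊p / h⌋₊ * h..⌊r / h⌋₊ * h, χ (chernoffStep F h σ z) := by
  simp only [chernoffStep]
  rw [intervalIntegral_comp_natFloor_div (fun j => χ ((F h ^ j) z)) hh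
    (natFloor_div_le_natFloor_div hpr hh.le)]
  simp [chernoffSum, map_sum]

variable {F}

theorem chernoffStep_sub_apply (hF0 : F 0 = 1) {h p r : ℝ} (hh : 0 < h) (hpr : p ≤ r) (f : E) :
    chernoffStep F h r f - chernoffStep F h p f =
      (h • chernoffSum F h p r) (h⁻¹ • (F h f - F 0 f)) := by
  rw [← sub_apply, chernoffStep_sub_chernoffStep F hh.le hpr, smul_apply, map_smul,
    smul_inv_smul₀ hh.ne', hF0]
  rfl

theorem dual_chernoffStep_sub_apply (hF0 : F 0 = 1) {h p r : ℝ} (hh : 0 < h) (hpr : p ≤ r)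
    (φ : StrongDual ℝ E) (f : E) :
    φ (chernoffStep F h r f) - φ (chernoffStep F h p f) =
      (h⁻¹ • (adjCLM (F h) φ - adjCLM (F 0) φ)) ((h • chernoffSum F h p r) f) := by
  rw [← map_sub, ← sub_apply, chernoffStep_sub_chernoffStep F hh.le hpr,
    ← (commute_chernoffSum F h p r).eq]
  simp only [smul_apply, sub_apply, adjCLM_apply, mul_apply_eq_comp, map_smul, hF0,
    one_apply_eq_self, map_sub, smul_eq_mul]
  field_simp

theorem chernoffStep_div_natCast {t : ℝ} (ht : t ≠ 0) (n : ℕ) (τ : ℝ) :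
    chernoffStep F (t / n) (τ * t) = F (t / n) ^ ⌊n * τ⌋₊ := by
  rw [chernoffStep, div_div_eq_mul_div]
  field_simp

end ChernoffStep

namespace MemFClass

variable {F : ℝ → E →L[ℝ] E} {M a : ℝ}

section FixedStep

variable {h : ℝ}

theorem norm_pow_le (hF : MemFClass F M a) (hM : 1 ≤ M) {c : ℝ} (hh : 0 ≤ h) (hc : 0 ≤ c)
    {m : ℕ} (hm : m * h ≤ c) : ‖F h ^ m‖ ≤ M * Real.exp (max a 0 * c) := by
  have hexp : 1 ≤ Real.exp (max a 0 * c) := Real.one_le_exp (by positivity)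
  rcases Nat.eq_zero_or_pos m with rfl | hm0
  · calc ‖F h ^ 0‖ ≤ 1 := by rw [pow_zero]; exact ContinuousLinearMap.norm_id_le
      _ ≤ M * Real.exp (max a 0 * c) := by nlinarith
  have hexp_le : a * m * h ≤ max a 0 * c :=
    calc a * m * h ≤ max a 0 * (m * h) := by rw [mul_assoc]; gcongr; exact le_max_left a 0
      _ ≤ max a 0 * c := by gcongr
  simpa using (hF.2.1 1 m one_pos hm0 h hh).trans
    (by gcongr; simpa using hexp_le : M * Real.exp (a * m * h / (1 : ℕ)) ≤ _)

theorem norm_chernoffStep_le (hF : MemFClass F M a) (hM : 1 ≤ M) {σ c : ℝ} (hh : 0 ≤ h)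
    (hσc : σ ≤ c) (hc : 0 ≤ c) : ‖chernoffStep F h σ‖ ≤ M * Real.exp (max a 0 * c) :=
  hF.norm_pow_le hM hh hc (natFloor_div_mul_le hσc hc hh)

theorem norm_dual_chernoffStep_apply_le (hF : MemFClass F M a) (hM : 1 ≤ M) {σ c : ℝ}
    (hh : 0 ≤ h) (hσc : σ ≤ c) (hc : 0 ≤ c) (χ : StrongDual ℝ E) (z : E) :
    ‖χ (chernoffStep F h σ z)‖ ≤ ‖χ‖ * (M * Real.exp (max a 0 * c) * ‖z‖) :=
  (χ.le_opNorm _).trans <| by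
    gcongr
    exact ContinuousLinearMap.le_of_opNorm_le _ (hF.norm_chernoffStep_le hM hh hσc hc) z

theorem intervalIntegrable_dual_chernoffStep_apply (hF : MemFClass F M a) (hM : 1 ≤ M) {c : ℝ}
    (hh : 0 ≤ h) (hc : 0 ≤ c) (χ : StrongDual ℝ E) (z : E) {σ₁ σ₂ : ℝ} (h₁ : σ₁ ≤ c)
    (h₂ : σ₂ ≤ c) : IntervalIntegrable (fun σ => χ (chernoffStep F h σ z)) volume σ₁ σ₂ :=
  (intervalIntegrable_const (c := ‖χ‖ * (M * Real.exp (max a 0 * c) * ‖z‖))).mono_fun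
    (measurable_dual_chernoffStep_apply F h χ z).aestronglyMeasurable
    ((ae_restrict_mem measurableSet_uIoc).mono fun _ hσ =>
      (hF.norm_dual_chernoffStep_apply_le hM hh (hσ.2.trans (max_le h₁ h₂)) hc χ z).trans
        (Real.le_norm_self _))

theorem norm_smul_chernoffSum_le (hF : MemFClass F M a) (hM : 1 ≤ M) {p r : ℝ} (hh : 0 < h)
    (hp : 0 ≤ p) (hpr : p ≤ r) :
    ‖h • chernoffSum F h p r‖ ≤ (r - p + h) * (M * Real.exp (max a 0 * r)) := by
  have hr : 0 ≤ r := hp.trans hpr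
  have hterm : ∀ j ∈ Finset.Ico ⌊p / h⌋₊ ⌊r / h⌋₊, ‖F h ^ j‖ ≤ M * Real.exp (max a 0 * r) :=
    fun j hj => hF.norm_pow_le hM hh.le hr <|
      (mul_le_mul_of_nonneg_right (Nat.cast_le.2 (Finset.mem_Ico.1 hj).2.le) hh.le).trans
        (natFloor_div_mul_le le_rfl hr hh.le)
  have hcount : ((⌊r / h⌋₊ - ⌊p / h⌋₊ : ℕ) : ℝ) * h ≤ r - p + h := by
    rw [Nat.cast_sub (natFloor_div_le_natFloor_div hpr hh.le), sub_mul]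
    linarith [natFloor_div_mul_le le_rfl hr hh.le, sub_lt_natFloor_div_mul p hh]
  calc ‖h • chernoffSum F h p r‖ = h * ‖chernoffSum F h p r‖ := by
        rw [norm_smul, Real.norm_of_nonneg hh.le]
    _ ≤ h * ((⌊r / h⌋₊ - ⌊p / h⌋₊ : ℕ) * (M * Real.exp (max a 0 * r))) := by
        gcongr
        simpa [chernoffSum] using norm_sum_le_of_le _ hterm
    _ ≤ (r - p + h) * (M * Real.exp (max a 0 * r)) := by
        rw [← mul_assoc, mul_comm h]
        gcongr

theorem norm_dual_smul_chernoffSum_apply_sub_integral_le (hF : MemFClass F M a) (hM : 1 ≤ M)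
    {p r : ℝ} (hh : 0 < h) (hp : 0 ≤ p) (hpr : p ≤ r) (χ : StrongDual ℝ E) (z : E) :
    ‖χ ((h • chernoffSum F h p r) z) - ∫ σ in p..r, χ (chernoffStep F h σ z)‖ ≤
      2 * h * (‖χ‖ * (M * Real.exp (max a 0 * r) * ‖z‖)) := by
  have hr : 0 ≤ r := hp.trans hpr
  have hint := fun {σ₁ σ₂ : ℝ} (h₁ : σ₁ ≤ r) (h₂ : σ₂ ≤ r) =>
    hF.intervalIntegrable_dual_chernoffStep_apply hM hh.le hr χ z h₁ h₂
  have hgrid : ∀ q ≤ r, (⌊q / h⌋₊ : ℝ) * h ≤ r := fun _ hqr => natFloor_div_mul_le hqr hr hh.le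
  have hgap : ∀ q, 0 ≤ q → q ≤ r → ‖∫ σ in ⌊q / h⌋₊ * h..q, χ (chernoffStep F h σ z)‖ ≤
      (‖χ‖ * (M * Real.exp (max a 0 * r) * ‖z‖)) * h := fun q hq hqr => by
    refine (intervalIntegral.norm_integral_le_of_norm_le_const fun σ hσ =>
      hF.norm_dual_chernoffStep_apply_le hM hh.le (hσ.2.trans (max_le (hgrid q hqr) hqr)) hr χ z)
      |>.trans (by gcongr; rw [abs_le]; constructor <;>
        linarith [natFloor_div_mul_le le_rfl hq hh.le, sub_lt_natFloor_div_mul q hh])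
  rw [dual_smul_chernoffSum_apply_eq_integral F hh hpr,
    intervalIntegral.integral_interval_sub_interval_comm (hint (hgrid p hpr) (hgrid r le_rfl))
      (hint hpr le_rfl) (hint (hgrid p hpr) hpr)]
  linarith [norm_sub_le (∫ σ in ⌊p / h⌋₊ * h..p, χ (chernoffStep F h σ z))
    (∫ σ in ⌊r / h⌋₊ * h..r, χ (chernoffStep F h σ z)), hgap p hp hpr, hgap r hr le_rfl]

end FixedStep

section Sequences

variable {h : ℕ → ℝ}

theorem tendsto_dual_smul_chernoffSum_apply (hF : MemFClass F M a) (hM : 1 ≤ M)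
    (hh : Tendsto h atTop (𝓝[>] 0)) (χ : StrongDual ℝ E) (z : E) {v : ℝ → ℝ} {p r : ℝ}
    (hp : 0 ≤ p) (hpr : p ≤ r)
    (hv : ∀ σ ∈ Set.Icc p r, Tendsto (fun k => χ (chernoffStep F (h k) σ z)) atTop (𝓝 (v σ))) :
    Tendsto (fun k => χ ((h k • chernoffSum F (h k) p r) z)) atTop
      (𝓝 (∫ σ in p..r, v σ)) := by
  have hr : 0 ≤ r := hp.trans hpr
  have hpos : ∀ᶠ k in atTop, 0 < h k := hh.eventually self_mem_nhdsWithin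
  have hdct : Tendsto (fun k => ∫ σ in p..r, χ (chernoffStep F (h k) σ z)) atTop
      (𝓝 (∫ σ in p..r, v σ)) :=
    intervalIntegral.tendsto_integral_filter_of_dominated_convergence _
      (.of_forall fun k => (measurable_dual_chernoffStep_apply F (h k) χ z).aestronglyMeasurable)
      (hpos.mono fun k hk => .of_forall fun σ hσ =>
        hF.norm_dual_chernoffStep_apply_le hM hk.le (Set.uIoc_of_le hpr ▸ hσ).2 hr χ z)
      intervalIntegrable_const
      (.of_forall fun σ hσ => hv σ (Set.Ioc_subset_Icc_self (Set.uIoc_of_le hpr ▸ hσ)))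
  have hsmall : Tendsto (fun k => 2 * h k * (‖χ‖ * (M * Real.exp (max a 0 * r) * ‖z‖))) atTop
      (𝓝 0) := by
    simpa using ((hh.mono_right nhdsWithin_le_nhds).const_mul 2).mul_const _
  refine hdct.congr_dist <| squeeze_zero' (.of_forall fun _ => dist_nonneg)
    (hpos.mono fun k hk => ?_) hsmall
  rw [dist_comm, dist_eq_norm]
  exact hF.norm_dual_smul_chernoffSum_apply_sub_integral_le hM hk hp hpr χ z

theorem tendsto_dual_smul_chernoffSum_of_tendsto (hF : MemFClass F M a) (hM : 1 ≤ M)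
    (hh : Tendsto h atTop (𝓝[>] 0)) {χ : ℕ → StrongDual ℝ E} {χ₀ : StrongDual ℝ E}
    (hχ : Tendsto χ atTop (𝓝 χ₀)) {z : ℕ → E} {z₀ : E} (hz : Tendsto z atTop (𝓝 z₀))
    {v : ℝ → ℝ} {p r : ℝ} (hp : 0 ≤ p) (hpr : p ≤ r)
    (hv : ∀ σ ∈ Set.Icc p r, Tendsto (fun k => χ₀ (chernoffStep F (h k) σ z₀)) atTop (𝓝 (v σ))) :
    Tendsto (fun k => χ k ((h k • chernoffSum F (h k) p r) (z k))) atTop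
      (𝓝 (∫ σ in p..r, v σ)) := by
  have hbound : ∀ᶠ k in atTop,
      ‖h k • chernoffSum F (h k) p r‖ ≤ (r - p + 1) * (M * Real.exp (max a 0 * r)) := by
    filter_upwards [hh.eventually self_mem_nhdsWithin,
      (hh.mono_right nhdsWithin_le_nhds).eventually (gt_mem_nhds one_pos)] with k hk hk1
    refine (hF.norm_smul_chernoffSum_le hM hk hp hpr).trans ?_
    gcongr
  simpa using (hF.tendsto_dual_smul_chernoffSum_apply hM hh χ₀ z₀ hp hpr hv).add
    (tendsto_dual_apply_sub_of_bounded hbound hχ hz)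

theorem eventually_norm_chernoffStep_sub_le_of_derivAtZero (hF : MemFClass F M a) (hM : 1 ≤ M)
    (hh : Tendsto h atTop (𝓝[>] 0)) {f y : E} (hfy : DerivAtZero F f y) :
    ∀ᶠ k in atTop, ∀ σ₁ σ₂, 0 ≤ σ₁ → σ₁ ≤ σ₂ →
      ‖chernoffStep F (h k) σ₂ f - chernoffStep F (h k) σ₁ f‖ ≤
        (σ₂ - σ₁ + h k) * (M * Real.exp (max a 0 * σ₂)) * (‖y‖ + 1) := by
  filter_upwards [hh.eventually self_mem_nhdsWithin,
    (hfy.comp hh).norm.eventually (gt_mem_nhds (lt_add_one ‖y‖))] with k hk hquot σ₁ σ₂ h₁ h₁₂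
  rw [chernoffStep_sub_apply hF.1 hk h₁₂]
  exact (ContinuousLinearMap.le_opNorm _ _).trans <| mul_le_mul
    (hF.norm_smul_chernoffSum_le hM hk h₁ h₁₂) hquot.le (norm_nonneg _) (by positivity)

theorem eventually_norm_chernoffStep_sub_le (hF : MemFClass F M a) (hM : 1 ≤ M)
    (hh : Tendsto h atTop (𝓝[>] 0)) (g : E) (c : ℝ) {ε : ℝ} (hε : 0 < ε) :
    ∃ δ > 0, ∀ᶠ k in atTop, ∀ σ₁ ∈ Set.Icc 0 c, ∀ σ₂ ∈ Set.Icc 0 c, |σ₁ - σ₂| ≤ δ →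
      ‖chernoffStep F (h k) σ₁ g - chernoffStep F (h k) σ₂ g‖ ≤ ε := by
  set B := M * Real.exp (max a 0 * c)
  have hB : 0 < B := by positivity
  obtain ⟨f, ⟨y, hfy⟩, hgf⟩ := hF.2.2.exists_dist_lt g (by positivity : 0 < ε / (4 * B))
  have hBgf : 2 * B * ‖g - f‖ ≤ ε / 2 := by
    rw [dist_eq_norm, lt_div_iff₀ (by positivity)] at hgf
    linarith
  set K := B * (‖y‖ + 1)
  have hK : 0 < K := by positivity
  refine ⟨ε / (4 * K), by positivity, ?_⟩
  filter_upwards [hF.eventually_norm_chernoffStep_sub_le_of_derivAtZero hM hh hfy,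
    hh.eventually self_mem_nhdsWithin,
    (hh.mono_right nhdsWithin_le_nhds).eventually (ge_mem_nhds (by positivity : 0 < ε / (4 * K)))]
    with k hlip hk hkδ
  have key : ∀ σ₁ ∈ Set.Icc 0 c, ∀ σ₂ ∈ Set.Icc 0 c, σ₁ ≤ σ₂ → σ₂ - σ₁ ≤ ε / (4 * K) →
      ‖chernoffStep F (h k) σ₂ g - chernoffStep F (h k) σ₁ g‖ ≤ ε := by
    intro σ₁ hσ₁ σ₂ hσ₂ h₁₂ hδ
    have hf : ‖chernoffStep F (h k) σ₂ f - chernoffStep F (h k) σ₁ f‖ ≤ ε / 2 :=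
      calc _ ≤ (σ₂ - σ₁ + h k) * (M * Real.exp (max a 0 * σ₂)) * (‖y‖ + 1) :=
            hlip σ₁ σ₂ hσ₁.1 h₁₂
        _ ≤ (ε / (4 * K) + ε / (4 * K)) * K := by
            rw [mul_assoc]
            refine mul_le_mul (by linarith) (mul_le_mul_of_nonneg_right ?_ (by positivity))
              (by positivity) (by positivity)
            exact mul_le_mul_of_nonneg_left (Real.exp_le_exp.2 (by gcongr; exact hσ₂.2))
              (by linarith)
        _ = ε / 2 := by field_simp; ring
    have hc : 0 ≤ c := hσ₁.1.trans hσ₁.2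
    linarith [norm_apply_sub_apply_le (hF.norm_chernoffStep_le hM hk.le hσ₂.2 hc)
      (hF.norm_chernoffStep_le hM hk.le hσ₁.2 hc) g f]
  intro σ₁ hσ₁ σ₂ hσ₂ hδ
  rcases le_total σ₁ σ₂ with h₁₂ | h₂₁
  · rw [norm_sub_rev]
    exact key σ₁ hσ₁ σ₂ hσ₂ h₁₂ ((le_abs_self _).trans (abs_sub_comm σ₁ σ₂ ▸ hδ))
  · exact key σ₂ hσ₂ σ₁ hσ₁ h₂₁ ((le_abs_self _).trans hδ)

theorem exists_weakTendsto_chernoffStep [CompleteSpace E] (hF : MemFClass F M a) (hM : 1 ≤ M)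
    (hh : Tendsto h atTop (𝓝[>] 0)) {c : ℝ} {D : Set ℝ} (hD : D ⊆ Set.Icc 0 c) {Φ : Set E}
    (hΦ : ∀ σ ∈ D, ∀ g ∈ Φ, ∃ L, WeakTendsto (fun k => chernoffStep F (h k) σ g) L)
    {σ : ℝ} (hσ : σ ∈ closure D) {g : E} (hg : g ∈ closedSpan Φ) :
    ∃ L, WeakTendsto (fun k => chernoffStep F (h k) σ g) L := by
  have hspan : ∀ σ' ∈ D, ∀ g' ∈ Submodule.span ℝ Φ,
      ∃ L, WeakTendsto (fun k => chernoffStep F (h k) σ' g') L := by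
    intro σ' hσ' g' hg'
    induction hg' using Submodule.span_induction with
    | mem x hx => exact hΦ σ' hσ' x hx
    | zero => exact ⟨0, fun φ => by simp⟩
    | add x y _ _ hx hy =>
      obtain ⟨Lx, hLx⟩ := hx
      obtain ⟨Ly, hLy⟩ := hy
      exact ⟨Lx + Ly, by simpa only [map_add] using hLx.add hLy⟩
    | smul r x _ hx =>
      obtain ⟨Lx, hLx⟩ := hx
      exact ⟨r • Lx, by simpa only [map_smul] using hLx.const_smul r⟩
  have hσc : σ ∈ Set.Icc 0 c := closure_minimal hD isClosed_Icc hσ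
  set B := M * Real.exp (max a 0 * c)
  have hB : 0 < B := by positivity
  refine exists_weakTendsto_of_approx fun ε hε => ?_
  obtain ⟨δ, hδ, hequi⟩ := hF.eventually_norm_chernoffStep_sub_le hM hh g c (half_pos hε)
  obtain ⟨σ', hσ'D, hσσ'⟩ := Metric.mem_closure_iff.1 hσ δ hδ
  have hg' : g ∈ closure (Submodule.span ℝ Φ : Set E) := by
    rwa [← Submodule.topologicalClosure_coe]
  obtain ⟨g', hg'Φ, hgg'⟩ := Metric.mem_closure_iff.1 hg' (ε / (2 * B)) (by positivity)
  obtain ⟨L, hL⟩ := hspan σ' hσ'D g' hg'Φ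
  refine ⟨fun k => chernoffStep F (h k) σ' g', L, hL, ?_⟩
  filter_upwards [hequi, hh.eventually self_mem_nhdsWithin] with k hk hk0
  have h₁ := hk σ hσc σ' (hD hσ'D) (by rw [← Real.dist_eq]; exact hσσ'.le)
  have h₂ : ‖chernoffStep F (h k) σ' (g - g')‖ ≤ ε / 2 :=
    calc _ ≤ B * ‖g - g'‖ := ContinuousLinearMap.le_of_opNorm_le _
          (hF.norm_chernoffStep_le hM hk0.le (hD hσ'D).2 (hσc.1.trans hσc.2)) _
      _ ≤ B * (ε / (2 * B)) := by rw [← dist_eq_norm]; gcongr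
      _ = ε / 2 := by field_simp
  calc ‖chernoffStep F (h k) σ g - chernoffStep F (h k) σ' g'‖
      = ‖(chernoffStep F (h k) σ g - chernoffStep F (h k) σ' g) +
          chernoffStep F (h k) σ' (g - g')‖ := by rw [map_sub]; abel_nf
    _ ≤ ε := (norm_add_le _ _).trans (by linarith)

theorem continuousOn_of_weakTendsto (hF : MemFClass F M a) (hM : 1 ≤ M)
    (hh : Tendsto h atTop (𝓝[>] 0)) {I : Set ℝ} (hI : I ⊆ Set.Ici 0) {g : E} {u : ℝ → E}
    (hu : ∀ s ∈ I, WeakTendsto (fun k => chernoffStep F (h k) s g) (u s)) : ContinuousOn u I := by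
  refine Metric.continuousOn_iff.2 fun s hs ε hε => ?_
  obtain ⟨δ, hδ, hequi⟩ := hF.eventually_norm_chernoffStep_sub_le hM hh g (s + 1) (half_pos hε)
  refine ⟨min δ 1, by positivity, fun r hr hrs => ?_⟩
  rw [Real.dist_eq, lt_min_iff, abs_lt, abs_lt] at hrs
  have hnorm := ((hu r hr).sub (hu s hs)).norm_le <| hequi.mono fun k hk =>
    hk r ⟨hI hr, by linarith⟩ s ⟨hI hs, by linarith⟩ (abs_le.2 ⟨by linarith, by linarith⟩)
  rw [dist_eq_norm]
  linarith

theorem dual_sub_eq_integral_of_derivAtZero (hF : MemFClass F M a) (hM : 1 ≤ M)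
    (hh : Tendsto h atTop (𝓝[>] 0)) {f y : E} (hfy : DerivAtZero F f y) {u w : ℝ → E}
    {p r : ℝ} (hp : 0 ≤ p) (hpr : p ≤ r)
    (hu : ∀ σ ∈ Set.Icc p r, WeakTendsto (fun k => chernoffStep F (h k) σ f) (u σ))
    (hw : ∀ σ ∈ Set.Icc p r, WeakTendsto (fun k => chernoffStep F (h k) σ y) (w σ))
    (φ : StrongDual ℝ E) : φ (u r) - φ (u p) = ∫ σ in p..r, φ (w σ) := by
  refine tendsto_nhds_unique ((hu r ⟨hpr, le_rfl⟩ φ).sub (hu p ⟨le_rfl, hpr⟩ φ)) ?_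
  refine (hF.tendsto_dual_smul_chernoffSum_of_tendsto hM hh tendsto_const_nhds (hfy.comp hh)
    hp hpr fun σ hσ => hw σ hσ φ).congr' ?_
  filter_upwards [hh.eventually self_mem_nhdsWithin] with k hk
  rw [← map_sub, chernoffStep_sub_apply hF.1 hk hpr]
  rfl

theorem dual_sub_eq_integral_of_adjDerivAtZero (hF : MemFClass F M a) (hM : 1 ≤ M)
    (hh : Tendsto h atTop (𝓝[>] 0)) {φ ψ : StrongDual ℝ E} (hφψ : AdjDerivAtZero F φ ψ)
    {f : E} {u : ℝ → E} {p r : ℝ} (hp : 0 ≤ p) (hr : 0 ≤ r)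
    (hu : ∀ σ ∈ Set.uIcc p r, WeakTendsto (fun k => chernoffStep F (h k) σ f) (u σ)) :
    φ (u r) - φ (u p) = ∫ σ in p..r, ψ (u σ) := by
  wlog hpr : p ≤ r generalizing p r
  · rw [intervalIntegral.integral_symm, ← this hr hp (by rwa [Set.uIcc_comm]) (le_of_not_ge hpr)]
    ring
  rw [Set.uIcc_of_le hpr] at hu
  refine tendsto_nhds_unique ((hu r ⟨hpr, le_rfl⟩ φ).sub (hu p ⟨le_rfl, hpr⟩ φ)) ?_
  refine (hF.tendsto_dual_smul_chernoffSum_of_tendsto hM hh (hφψ.comp hh) tendsto_const_nhds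
    hp hpr fun σ hσ => hu σ hσ ψ).congr' ?_
  filter_upwards [hh.eventually self_mem_nhdsWithin] with k hk
  rw [dual_chernoffStep_sub_apply hF.1 hk hpr]
  rfl

theorem hasDerivWithinAt_of_derivAtZero [CompleteSpace E] (hF : MemFClass F M a) (hM : 1 ≤ M)
    (hh : Tendsto h atTop (𝓝[>] 0)) {f y : E} (hfy : DerivAtZero F f y) {l : ℝ} {u w : ℝ → E}
    (hu : ∀ s ∈ Set.Ico 0 l, WeakTendsto (fun k => chernoffStep F (h k) s f) (u s))
    (hw : ∀ s ∈ Set.Ico 0 l, WeakTendsto (fun k => chernoffStep F (h k) s y) (w s))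
    {s : ℝ} (hs : s ∈ Set.Ico 0 l) : HasDerivWithinAt u (w s) (Set.Ico 0 l) s := by
  have hwc := hF.continuousOn_of_weakTendsto hM hh Set.Ico_subset_Ici_self hw
  refine hasDerivWithinAt_Ico_of_eq_integral hwc (fun r hr => ?_) hs
  have hsub : Set.Icc 0 r ⊆ Set.Ico 0 l := Set.Icc_subset_Ico_right hr.2
  refine (SeparatingDual.eq_iff_forall_dual_eq (R := ℝ)).2 fun φ => ?_
  rw [map_add, ← φ.intervalIntegral_comp_comm ((hwc.mono hsub).intervalIntegrable_of_Icc hr.1),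
    ← hF.dual_sub_eq_integral_of_derivAtZero hM hh hfy le_rfl hr.1 (fun σ hσ => hu σ (hsub hσ))
      (fun σ hσ => hw σ (hsub hσ)) φ]
  ring

theorem hasDerivWithinAt_dual_of_adjDerivAtZero (hF : MemFClass F M a) (hM : 1 ≤ M)
    (hh : Tendsto h atTop (𝓝[>] 0)) {φ ψ : StrongDual ℝ E} (hφψ : AdjDerivAtZero F φ ψ)
    {f : E} {l : ℝ} {u : ℝ → E}
    (hu : ∀ s ∈ Set.Ico 0 l, WeakTendsto (fun k => chernoffStep F (h k) s f) (u s))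
    {s : ℝ} (hs : s ∈ Set.Ico 0 l) :
    HasDerivWithinAt (fun r => φ (u r)) (ψ (u s)) (Set.Ico 0 l) s := by
  refine hasDerivWithinAt_Ico_of_eq_integral (v := fun σ => ψ (u σ)) (ψ.continuous.comp_continuousOn
    (hF.continuousOn_of_weakTendsto hM hh Set.Ico_subset_Ici_self hu)) (fun r hr => ?_) hs
  have hsub : Set.uIcc 0 r ⊆ Set.Ico 0 l := by
    rw [Set.uIcc_of_le hr.1]; exact Set.Icc_subset_Ico_right hr.2
  rw [← hF.dual_sub_eq_integral_of_adjDerivAtZero hM hh hφψ le_rfl hr.1 fun σ hσ => hu σ (hsub hσ)]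
  ring

end Sequences

theorem exists_weakTendsto_pow_natFloor_mul [CompleteSpace E] (hF : MemFClass F M a)
    (hM : 1 ≤ M) {t : ℝ} (ht : 0 < t) {n : ℕ → ℕ} (hn : StrictMono n) {l : ℝ} {Φ : Set E}
    (hΦ : ∀ g ∈ Φ, ∀ q : ℚ, 0 ≤ (q : ℝ) → (q : ℝ) < l →
      ∃ L, WeakTendsto (fun k => (F (t / n k) ^ ⌊(n k : ℝ) * q⌋₊) g) L)
    {g : E} (hg : g ∈ closedSpan Φ) {s : ℝ} (hs : s ∈ Set.Ico 0 l) :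
    ∃ L, WeakTendsto (fun k => (F (t / n k) ^ ⌊(n k : ℝ) * s⌋₊) g) L := by
  have hstep (τ : ℝ) (k : ℕ) := chernoffStep_div_natCast (F := F) ht.ne' (n k) τ
  set D := (· * t) '' (Set.Ico 0 l ∩ Set.range ((↑) : ℚ → ℝ))
  have hD : D ⊆ Set.Icc 0 (l * t) := by
    rintro _ ⟨q, ⟨hq, -⟩, rfl⟩
    exact ⟨by nlinarith [hq.1], by nlinarith [hq.2]⟩
  have hDΦ : ∀ σ ∈ D, ∀ g ∈ Φ, ∃ L, WeakTendsto (fun k => chernoffStep F (t / n k) σ g) L := by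
    rintro _ ⟨_, ⟨hq, q, rfl⟩, rfl⟩ g hg
    simpa only [hstep] using hΦ g hg q hq.1 hq.2
  have hsD : s * t ∈ closure D := image_closure_subset_closure_image (continuous_mul_const t)
    ⟨s, Set.Ico_subset_closure_inter_range_ratCast 0 l hs, rfl⟩
  simpa only [hstep] using hF.exists_weakTendsto_chernoffStep hM
    (tendsto_div_natCast_nhdsGT_zero ht hn) hD hDΦ hsD hg

end MemFClass

theorem chernoff_lemma6_general (F : ℝ → (X →L[ℝ] X)) (hF : MemF F)
    (t l : ℝ) (ht : 0 < t) (Φ : Set X)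
    (gk : ℕ → ℕ) (hgk : StrictMono gk)
    (hlim : ∀ g ∈ Φ, ∀ q : ℚ, 0 ≤ (q : ℝ) → (q : ℝ) < l →
      ∃ L : X, ∀ φ : StrongDual ℝ X,
        Tendsto (fun k : ℕ => φ (((F (t / (gk k))) ^ ⌊(gk k : ℝ) * (q : ℝ)⌋₊) g))
          atTop (𝓝 (φ L))) :
    -- the weak limit exists on the closed span for all `s ∈ [0, l)`
    (∀ g ∈ closedSpan Φ, ∀ s ∈ Set.Ico (0 : ℝ) l,
      ∃ L : X, ∀ φ : StrongDual ℝ X,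
        Tendsto (fun k : ℕ => φ (((F (t / (gk k))) ^ ⌊(gk k : ℝ) * s⌋₊) g))
          atTop (𝓝 (φ L))) ∧
    -- properties of the limit family `T_s`
    (∀ T : ℝ → X → X,
      (∀ s ∈ Set.Ico (0 : ℝ) l, ∀ g ∈ closedSpan Φ, ∀ φ : StrongDual ℝ X,
        Tendsto (fun k : ℕ => φ (((F (t / (gk k))) ^ ⌊(gk k : ℝ) * (s / t)⌋₊) g))
          atTop (𝓝 (φ (T s g)))) →
      -- (a) linearity and exponential bound
      ((∀ s ∈ Set.Ico (0 : ℝ) l, ∀ g₁ ∈ closedSpan Φ, ∀ g₂ ∈ closedSpan Φ,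
          T s (g₁ + g₂) = T s g₁ + T s g₂) ∧
        (∀ s ∈ Set.Ico (0 : ℝ) l, ∀ (c : ℝ), ∀ g ∈ closedSpan Φ, T s (c • g) = c • T s g) ∧
        (∃ M, 1 ≤ M ∧ ∃ a : ℝ, ∀ s ∈ Set.Ico (0 : ℝ) l, ∀ g ∈ closedSpan Φ,
          ‖T s g‖ ≤ M * Real.exp (a * s) * ‖g‖)) ∧
      -- (b) continuity in `s`
      (∀ g ∈ closedSpan Φ, ContinuousOn (fun s => T s g) (Set.Ico (0 : ℝ) l)) ∧
      -- (c) differentiability in `s`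
      (∀ f ∈ closedSpan Φ, ∀ y : X, DerivAtZero F f y → y ∈ closedSpan Φ →
        ∀ s ∈ Set.Ico (0 : ℝ) l,
          HasDerivWithinAt (fun r => T r f) (T s y) (Set.Ico (0 : ℝ) l) s) ∧
      -- (d) the integral identity
      (∀ φ ψ : StrongDual ℝ X, AdjDerivAtZero F φ ψ →
        ∀ m ∈ Set.Ico (0 : ℝ) l, ∀ p ∈ Set.Ico (0 : ℝ) l, ∀ f ∈ closedSpan Φ,
          φ (T m f) - φ (T p f) = ∫ s in p..m, ψ (T s f)) ∧
      -- (e) scalar differentiability through the adjoint derivative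
      (∀ φ ψ : StrongDual ℝ X, AdjDerivAtZero F φ ψ →
        ∀ f ∈ closedSpan Φ, ∀ s ∈ Set.Ico (0 : ℝ) l,
          HasDerivWithinAt (fun r => φ (T r f)) (ψ (T s f)) (Set.Ico (0 : ℝ) l) s) ∧
      -- (f) the adjoint of the adjoint derivative
      (Dense (StrongDual.toWeakDual ''
          {φ : StrongDual ℝ X | ∃ ψ, AdjDerivAtZero F φ ψ} : Set (WeakDual ℝ X)) →
        ∀ f ∈ closedSpan Φ, ∀ y : X, DerivAtZero F f y → y ∈ closedSpan Φ →
          ((∀ g z : X, DerivAtZero F g z → AdjAdjRel F g z) ∧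
            ∀ s ∈ Set.Ico (0 : ℝ) l, ∃ w : X, AdjAdjRel F (T s f) w ∧
              HasDerivWithinAt (fun r => T r f) w (Set.Ico (0 : ℝ) l) s))) := by
  obtain ⟨M, hM, a, hF⟩ := hF
  have hh := tendsto_div_natCast_nhdsGT_zero ht hgk
  refine ⟨fun g hg s hs => hF.exists_weakTendsto_pow_natFloor_mul hM ht hgk hlim hg hs,
    fun T hT => ?_⟩
  have hT' : ∀ s ∈ Set.Ico 0 l, ∀ g ∈ closedSpan Φ,
      WeakTendsto (fun k => chernoffStep F (t / gk k) s g) (T s g) := fun s hs g hg φ => by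
    simpa only [← chernoffStep_div_natCast ht.ne', div_mul_cancel₀ s ht.ne'] using hT s hs g hg φ
  have hc : ∀ f ∈ closedSpan Φ, ∀ y, DerivAtZero F f y → y ∈ closedSpan Φ →
      ∀ s ∈ Set.Ico 0 l, HasDerivWithinAt (fun r => T r f) (T s y) (Set.Ico 0 l) s :=
    fun f hf y hfy hy _ hs => hF.hasDerivWithinAt_of_derivAtZero hM hh hfy
      (fun s hs => hT' s hs f hf) (fun s hs => hT' s hs y hy) hs
  have he : ∀ φ ψ, AdjDerivAtZero F φ ψ → ∀ f ∈ closedSpan Φ, ∀ s ∈ Set.Ico 0 l,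
      HasDerivWithinAt (fun r => φ (T r f)) (ψ (T s f)) (Set.Ico 0 l) s :=
    fun _ _ hφψ f hf _ hs => hF.hasDerivWithinAt_dual_of_adjDerivAtZero hM hh hφψ
      (fun s hs => hT' s hs f hf) hs
  refine ⟨⟨fun s hs g₁ h₁ g₂ h₂ => ?_, fun s hs c g hg => ?_, M, hM, max a 0, fun s hs g hg => ?_⟩,
    fun g hg => hF.continuousOn_of_weakTendsto hM hh Set.Ico_subset_Ici_self fun s hs =>
      hT' s hs g hg,
    hc, fun φ ψ hφψ m hm p hp f hf => ?_, he, fun _ f hf y hfy hy =>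
      ⟨fun _ _ => adjAdjRel_of_derivAtZero, fun s hs => ⟨T s y, ?_, hc f hf y hfy hy s hs⟩⟩⟩
  · exact (hT' s hs _ (add_mem h₁ h₂)).unique <| by
      simpa only [map_add] using (hT' s hs g₁ h₁).add (hT' s hs g₂ h₂)
  · exact (hT' s hs _ (Submodule.smul_mem _ c hg)).unique <| by
      simpa only [map_smul] using (hT' s hs g hg).const_smul c
  · exact (hT' s hs g hg).norm_le <| (hh.eventually self_mem_nhdsWithin).mono fun k hk =>
      ContinuousLinearMap.le_of_opNorm_le _ (hF.norm_chernoffStep_le hM hk.le le_rfl hs.1) g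
  · exact hF.dual_sub_eq_integral_of_adjDerivAtZero hM hh hφψ hp.1 hm.1 fun σ hσ =>
      hT' σ (Set.ordConnected_Ico.uIcc_subset hp hm hσ) f hf
  · exact fun φ ψ hφψ => (uniqueDiffOn_Ico 0 l s hs).eq_deriv _ (he φ ψ hφψ f hf s hs)
      (φ.hasFDerivAt.comp_hasDerivWithinAt s (hc f hf y hfy hy s hs))

/-- Lemma 6: extension of the weak limits from `Φ` and rational times to
the closed span of `Φ` and all times in `[0, l)`, together with properties (a)–(f). -/
theorem chernoff_lemma6 (F : ℝ → (X →L[ℝ] X)) (hF : MemF F)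
    (t l : ℝ) (ht : 0 < t) (hl : 0 < l) (Φ : Set X)
    (gk : ℕ → ℕ) (hgk : StrictMono gk)
    (hlim : ∀ g ∈ Φ, ∀ q : ℚ, 0 ≤ (q : ℝ) → (q : ℝ) < l →
      ∃ L : X, ∀ φ : StrongDual ℝ X,
        Tendsto (fun k : ℕ => φ (((F (t / (gk k))) ^ ⌊(gk k : ℝ) * (q : ℝ)⌋₊) g))
          atTop (𝓝 (φ L))) :
    -- the weak limit exists on the closed span for all `s ∈ [0, l)`
    (∀ g ∈ closedSpan Φ, ∀ s ∈ Set.Ico (0 : ℝ) l,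
      ∃ L : X, ∀ φ : StrongDual ℝ X,
        Tendsto (fun k : ℕ => φ (((F (t / (gk k))) ^ ⌊(gk k : ℝ) * s⌋₊) g))
          atTop (𝓝 (φ L))) ∧
    -- properties of the limit family `T_s`
    (∀ T : ℝ → X → X,
      (∀ s ∈ Set.Ico (0 : ℝ) l, ∀ g ∈ closedSpan Φ, ∀ φ : StrongDual ℝ X,
        Tendsto (fun k : ℕ => φ (((F (t / (gk k))) ^ ⌊(gk k : ℝ) * (s / t)⌋₊) g))
          atTop (𝓝 (φ (T s g)))) →
      -- (a) linearity and exponential bound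
      ((∀ s ∈ Set.Ico (0 : ℝ) l, ∀ g₁ ∈ closedSpan Φ, ∀ g₂ ∈ closedSpan Φ,
          T s (g₁ + g₂) = T s g₁ + T s g₂) ∧
        (∀ s ∈ Set.Ico (0 : ℝ) l, ∀ (c : ℝ), ∀ g ∈ closedSpan Φ, T s (c • g) = c • T s g) ∧
        (∃ M, 1 ≤ M ∧ ∃ a : ℝ, ∀ s ∈ Set.Ico (0 : ℝ) l, ∀ g ∈ closedSpan Φ,
          ‖T s g‖ ≤ M * Real.exp (a * s) * ‖g‖)) ∧
      -- (b) continuity in `s`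
      (∀ g ∈ closedSpan Φ, ContinuousOn (fun s => T s g) (Set.Ico (0 : ℝ) l)) ∧
      -- (c) differentiability in `s`
      (∀ f ∈ closedSpan Φ, ∀ y : X, DerivAtZero F f y → y ∈ closedSpan Φ →
        ∀ s ∈ Set.Ico (0 : ℝ) l,
          HasDerivWithinAt (fun r => T r f) (T s y) (Set.Ico (0 : ℝ) l) s) ∧
      -- (d) the integral identity
      (∀ φ ψ : StrongDual ℝ X, AdjDerivAtZero F φ ψ →
        ∀ m ∈ Set.Ico (0 : ℝ) l, ∀ p ∈ Set.Ico (0 : ℝ) l, ∀ f ∈ closedSpan Φ,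
          φ (T m f) - φ (T p f) = ∫ s in p..m, ψ (T s f)) ∧
      -- (e) scalar differentiability through the adjoint derivative
      (∀ φ ψ : StrongDual ℝ X, AdjDerivAtZero F φ ψ →
        ∀ f ∈ closedSpan Φ, ∀ s ∈ Set.Ico (0 : ℝ) l,
          HasDerivWithinAt (fun r => φ (T r f)) (ψ (T s f)) (Set.Ico (0 : ℝ) l) s) ∧
      -- (f) the adjoint of the adjoint derivative
      (Dense (StrongDual.toWeakDual ''
          {φ : StrongDual ℝ X | ∃ ψ, AdjDerivAtZero F φ ψ} : Set (WeakDual ℝ X)) →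
        ∀ f ∈ closedSpan Φ, ∀ y : X, DerivAtZero F f y → y ∈ closedSpan Φ →
          ((∀ g z : X, DerivAtZero F g z → AdjAdjRel F g z) ∧
            ∀ s ∈ Set.Ico (0 : ℝ) l, ∃ w : X, AdjAdjRel F (T s f) w ∧
              HasDerivWithinAt (fun r => T r f) w (Set.Ico (0 : ℝ) l) s))) :=
  chernoff_lemma6_general F hF t l ht Φ gk hgk hlim
end
end

section
/- Let X be a Banach space, F ∈ 𝓕_X, t > 0, and Φ ⊂ X a set. Assume there is an increasing sequence (g_k) of natural numbers such that the norm limit lim_{k→∞} F(t/g_k)^{[g_k s]} g exists for every g ∈ Φ and every nonnegative rational s. Then this limit exists for every g in the closed linear span of Φ and every real s ≥ 0, and the operators T_s g := lim_{k→∞} F(t/g_k)^{[g_k s/t]} g on the closed span of Φ satisfy: (a) if T_s f lies in the closed span of Φ for some s ≥ 0, then T_{s+l} f = T_l T_s f for all l > 0; (b) if f lies in the closed span of Φ, f ∈ D(closure of F'(0)), (closure of F'(0))f lies in the closed span of Φ, and there is a sequence (f_n) in (closed span of Φ) ∩ D(F'(0)) with f_n → f and F'(0)f_n → (closure of F'(0))f,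 then d/ds(T_s f) = T_s (closure of F'(0)) f for all s ≥ 0; (c) if for some s ≥ 0 one has T_s f in (closed span of Φ) ∩ D(closure of F'(0)), f ∈ (closed span of Φ) ∩ D(F'(0)), both (closure of F'(0)) T_s f and F'(0) f in the closed span of Φ, and there is a sequence (f_n) in (closed span of Φ) ∩ D(F'(0)) with f_n → T_s f and F'(0)f_n → (closure of F'(0)) T_s f, then d/ds(T_s f) = (closure of F'(0)) T_s f. -/
open Filter Topology MeasureTheory

noncomputable section

variable {X : Type*} [NormedAddCommGroup X] [NormedSpace ℝ X] [CompleteSpace X]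

/-!
Put `τₖ = t / gₖ` and `Pₖ = F(τₖ)`, so that `Pₖ ^ ⌊s / τₖ⌋₊` approximates the evolution up to
time `s`. The powers of `Pₖ` are bounded as long as `m τₖ` stays bounded, and on the dense set
where `F'(0)` exists `‖Pₖ ^ m ψ - ψ‖ = O(m τₖ)`; hence `Pₖ ^ m g → g` uniformly in `k` as
`m τₖ → 0`, for every `g`. The uniform bounds carry the limits from `Φ` to its closed span, this
equicontinuity carries them from rational to real times and gives `T (s + l) = T l ∘ T s`, since
`⌊(s + l) / τ⌋₊` and `⌊s / τ⌋₊ + ⌊l / τ⌋₊` differ by at most one. For the derivative, the discrete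
Duhamel formula `P ^ d x - x - d • w = ∑ j < d, (P ^ j (P x - x - w) + (P ^ j w - w))` shows that
`T v f - T u f - (v - u) • T u y = o(v - u)`.
-/

open Set

section Generic

variable {E G : Type*} [NormedAddCommGroup E] [NormedSpace ℝ E]
  [NormedAddCommGroup G] [NormedSpace ℝ G]

theorem norm_pow_apply_sub_sub_smul_le (P : E →L[ℝ] E) (x w : E) {C ε : ℝ} (d : ℕ)
    (hC : ∀ j < d, ‖P ^ j‖ ≤ C) (hw : ∀ j < d, ‖(P ^ j) w - w‖ ≤ ε) :
    ‖(P ^ d) x - x - (d : ℝ) • w‖ ≤ d * (C * ‖P x - x - w‖ + ε) := by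
  induction d with
  | zero => simp
  | succ d ih =>
    have hstep : (P ^ (d + 1)) x - x - ((d + 1 : ℕ) : ℝ) • w
        = ((P ^ d) x - x - (d : ℝ) • w) + (P ^ d) (P x - x - w) + ((P ^ d) w - w) := by
      rw [pow_succ, mul_apply_eq_comp, map_sub, map_sub]
      push_cast
      rw [add_smul, one_smul]
      abel
    have hPd : ‖(P ^ d) (P x - x - w)‖ ≤ C * ‖P x - x - w‖ :=
      ((P ^ d).le_opNorm _).trans (by gcongr; exact hC d d.lt_succ_self)
    rw [hstep]
    calc _ ≤ ‖(P ^ d) x - x - (d : ℝ) • w‖ + ‖(P ^ d) (P x - x - w)‖ + ‖(P ^ d) w - w‖ :=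
          norm_add₃_le
      _ ≤ d * (C * ‖P x - x - w‖ + ε) + C * ‖P x - x - w‖ + ε := by
          gcongr
          · exact ih (fun j hj => hC j (hj.trans d.lt_succ_self))
              (fun j hj => hw j (hj.trans d.lt_succ_self))
          · exact hw d d.lt_succ_self
      _ = ((d + 1 : ℕ) : ℝ) * (C * ‖P x - x - w‖ + ε) := by push_cast; ring

theorem tendsto_apply_zero_of_norm_le {A : ℕ → E →L[ℝ] G} {C : ℝ} (hA : ∀ k, ‖A k‖ ≤ C)
    {x : ℕ → E} (hx : Tendsto x atTop (𝓝 0)) : Tendsto (fun k => A k (x k)) atTop (𝓝 0) :=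
  squeeze_zero_norm
    (fun k => ((A k).le_opNorm _).trans (mul_le_mul_of_nonneg_right (hA k) (norm_nonneg _)))
    (by simpa using hx.norm.const_mul C)

theorem pow_apply_sub_pow_apply (P : E →L[ℝ] E) {m n : ℕ} (h : m ≤ n) (x : E) :
    (P ^ n) x - (P ^ m) x = (P ^ m) ((P ^ (n - m)) x - x) := by
  rw [map_sub, ← mul_apply_eq_comp, ← pow_add, Nat.add_sub_cancel' h]

theorem norm_pow_apply_sub_pow_apply_le (P : E →L[ℝ] E) {m n : ℕ} (h : m ≤ n) (x : E) :
    ‖(P ^ n) x - (P ^ m) x‖ ≤ ‖P ^ m‖ * ‖(P ^ (n - m)) x - x‖ := by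
  rw [pow_apply_sub_pow_apply P h]
  exact (P ^ m).le_opNorm _

theorem cauchySeq_of_forall_eventually_dist_le {α : Type*} [PseudoMetricSpace α]
    {u : ℕ → α} (h : ∀ ε > 0, ∃ v : ℕ → α, CauchySeq v ∧ ∀ᶠ k in atTop, dist (u k) (v k) ≤ ε) :
    CauchySeq u := by
  rw [Metric.cauchySeq_iff]
  intro ε hε
  obtain ⟨v, hv, huv⟩ := h (ε / 4) (by positivity)
  obtain ⟨K, hK⟩ := eventually_atTop.1 huv
  obtain ⟨N, hN⟩ := Metric.cauchySeq_iff.1 hv (ε / 4) (by positivity)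
  refine ⟨max K N, fun m hm n hn => ?_⟩
  have h1 := hK m (le_of_max_le_left hm)
  have h2 := hK n (le_of_max_le_left hn)
  have h3 := hN m (le_of_max_le_right hm) n (le_of_max_le_right hn)
  calc dist (u m) (u n) ≤ dist (u m) (v m) + dist (v m) (v n) + dist (v n) (u n) :=
        dist_triangle4 _ _ _ _
    _ < ε := by rw [dist_comm (v n)]; linarith

def convergenceSubmodule (A : ℕ → E →L[ℝ] G) : Submodule ℝ E where
  carrier := {g | ∃ L, Tendsto (fun k => A k g) atTop (𝓝 L)}
  add_mem' := fun ⟨L, hL⟩ ⟨L', hL'⟩ => ⟨L + L', by simpa using hL.add hL'⟩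
  zero_mem' := ⟨0, by simp⟩
  smul_mem' := fun c _ ⟨L, hL⟩ => ⟨c • L, by simpa using hL.const_smul c⟩

theorem isClosed_convergenceSubmodule [CompleteSpace G] {A : ℕ → E →L[ℝ] G} {C : ℝ}
    (hA : ∀ k, ‖A k‖ ≤ C) : IsClosed (convergenceSubmodule A : Set E) := by
  refine isClosed_of_closure_subset fun g hg => cauchySeq_tendsto_of_complete ?_
  refine cauchySeq_of_forall_eventually_dist_le fun ε hε => ?_
  have hC : 0 ≤ C := (norm_nonneg _).trans (hA 0)
  obtain ⟨g', ⟨L, hL⟩, hgg'⟩ := Metric.mem_closure_iff.1 hg (ε / (C + 1)) (by positivity)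
  refine ⟨fun k => A k g', hL.cauchySeq, Eventually.of_forall fun k => ?_⟩
  calc dist (A k g) (A k g') ≤ C * dist g g' := by
        rw [dist_eq_norm, dist_eq_norm, ← map_sub]
        exact ((A k).le_opNorm _).trans (by gcongr; exact hA k)
    _ ≤ (C + 1) * (ε / (C + 1)) := by gcongr; linarith
    _ = ε := by field_simp

theorem floor_div_mul_le {s : ℝ} (hs : 0 ≤ s) (τ : ℝ) : (⌊s / τ⌋₊ : ℝ) * τ ≤ s := by
  rcases le_or_gt τ 0 with hτ | hτ
  · simp [Nat.floor_eq_zero.2 ((div_nonpos_of_nonneg_of_nonpos hs hτ).trans_lt one_pos), hs]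
  · exact (le_div_iff₀ hτ).1 (Nat.floor_le (by positivity))

theorem lt_floor_div_mul_add (s : ℝ) {τ : ℝ} (hτ : 0 < τ) : s < ⌊s / τ⌋₊ * τ + τ := by
  have := Nat.lt_floor_add_one (s / τ)
  rw [div_lt_iff₀ hτ] at this
  linarith

theorem floor_div_sub_floor_div_mul_lt {u v τ : ℝ} (hτ : 0 < τ) (hu : 0 ≤ u) (huv : u ≤ v) :
    ((⌊v / τ⌋₊ - ⌊u / τ⌋₊ : ℕ) : ℝ) * τ < v - u + τ := by
  rw [Nat.cast_sub (Nat.floor_le_floor (div_le_div_of_nonneg_right huv hτ.le)), sub_mul]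
  linarith [floor_div_mul_le (hu.trans huv) τ, lt_floor_div_mul_add u hτ]

theorem tendsto_floor_div_mul {τ : ℕ → ℝ} (hτ : Tendsto τ atTop (𝓝[>] 0)) {s : ℝ} (hs : 0 ≤ s) :
    Tendsto (fun k => (⌊s / τ k⌋₊ : ℝ) * τ k) atTop (𝓝 s) := by
  have hτ0 : Tendsto τ atTop (𝓝 0) := hτ.mono_right nhdsWithin_le_nhds
  refine tendsto_of_tendsto_of_tendsto_of_le_of_le' (by simpa using hτ0.const_sub s)
    tendsto_const_nhds ?_ (Eventually.of_forall fun k => floor_div_mul_le hs (τ k))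
  filter_upwards [hτ.eventually self_mem_nhdsWithin] with k hk
  linarith [lt_floor_div_mul_add s (show 0 < τ k from hk)]

end Generic

section Scheme

variable {E : Type*} [NormedAddCommGroup E] [NormedSpace ℝ E]

def HasSchemeDeriv (P : ℕ → E →L[ℝ] E) (τ : ℕ → ℝ) (ψ y : E) : Prop :=
  Tendsto (fun k => (τ k)⁻¹ • (P k ψ - ψ)) atTop (𝓝 y)

/-- `P k` is one step of length `τ k` of an approximation of a semigroup, so `P k ^ ⌊s / τ k⌋₊`
approximates the evolution up to time `s`. -/
structure IsChernoffScheme (P : ℕ → E →L[ℝ] E) (τ : ℕ → ℝ) : Prop where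
  tendsto_step : Tendsto τ atTop (𝓝[>] 0)
  exists_norm_pow_le : ∀ S : ℝ, ∃ C, 0 ≤ C ∧ ∀ k (m : ℕ), (m : ℝ) * τ k ≤ S → ‖P k ^ m‖ ≤ C
  dense_hasSchemeDeriv : Dense {ψ | ∃ y, HasSchemeDeriv P τ ψ y}

def schemeGraphOn (P : ℕ → E →L[ℝ] E) (τ : ℕ → ℝ) (V : Set E) : Set (E × E) :=
  {p | p.1 ∈ V ∧ HasSchemeDeriv P τ p.1 p.2}

def IsSchemeLimitOn (P : ℕ → E →L[ℝ] E) (τ : ℕ → ℝ) (T : ℝ → E → E) (V : Set E) : Prop :=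
  ∀ s, 0 ≤ s → ∀ g ∈ V, Tendsto (fun k => (P k ^ ⌊s / τ k⌋₊) g) atTop (𝓝 (T s g))

variable {P : ℕ → E →L[ℝ] E} {τ : ℕ → ℝ}

theorem HasSchemeDeriv.eventually_norm_sub_sub_smul_le {ψ z : E} (h : HasSchemeDeriv P τ ψ z)
    (hτ : ∀ᶠ k in atTop, 0 < τ k) (w : E) {ε : ℝ} (hε : 0 < ε) :
    ∀ᶠ k in atTop, ‖P k ψ - ψ - τ k • w‖ ≤ τ k * (‖z - w‖ + ε) := by
  filter_upwards [hτ, Metric.tendsto_nhds.1 h ε hε] with k hk hdist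
  have hsplit : P k ψ - ψ - τ k • w = τ k • ((τ k)⁻¹ • (P k ψ - ψ) - z) + τ k • (z - w) := by
    rw [smul_sub, smul_inv_smul₀ hk.ne', smul_sub]
    abel
  rw [dist_eq_norm] at hdist
  rw [hsplit]
  calc _ ≤ ‖τ k • ((τ k)⁻¹ • (P k ψ - ψ) - z)‖ + ‖τ k • (z - w)‖ := norm_add_le _ _
    _ ≤ τ k * ε + τ k * ‖z - w‖ := by
        rw [norm_smul, norm_smul, Real.norm_of_nonneg hk.le]
        gcongr
    _ = τ k * (‖z - w‖ + ε) := by ring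

namespace IsChernoffScheme

theorem eventually_pos (hP : IsChernoffScheme P τ) : ∀ᶠ k in atTop, 0 < τ k :=
  hP.tendsto_step.eventually self_mem_nhdsWithin

theorem tendsto_zero (hP : IsChernoffScheme P τ) : Tendsto τ atTop (𝓝 0) :=
  hP.tendsto_step.mono_right nhdsWithin_le_nhds

theorem exists_eventually_norm_pow_apply_sub_le (hP : IsChernoffScheme P τ) (g : E) {ε : ℝ}
    (hε : 0 < ε) :
    ∃ δ > 0, ∀ᶠ k in atTop, ∀ m : ℕ, (m : ℝ) * τ k ≤ δ → ‖(P k ^ m) g - g‖ ≤ ε := by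
  obtain ⟨C, hC0, hC⟩ := hP.exists_norm_pow_le 1
  obtain ⟨ψ, ⟨z, hψ⟩, hgψ⟩ :=
    hP.dense_hasSchemeDeriv.exists_dist_lt g (show 0 < ε / (2 * (C + 1)) by positivity)
  rw [dist_eq_norm] at hgψ
  set B := C * (‖z‖ + 1)
  have hB : 0 ≤ B := by positivity
  refine ⟨min 1 (ε / (2 * (B + 1))), by positivity, ?_⟩
  filter_upwards [hψ.eventually_norm_sub_sub_smul_le hP.eventually_pos 0 one_pos,
    hP.eventually_pos] with k hk hτ m hm
  rw [smul_zero, sub_zero, sub_zero] at hk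
  have hPj : ∀ j ≤ m, ‖P k ^ j‖ ≤ C := fun j hj =>
    hC k j (le_trans (by gcongr) (hm.trans (min_le_left _ _)))
  have hψm : ‖(P k ^ m) ψ - ψ‖ ≤ B * (m * τ k) := by
    have h := norm_pow_apply_sub_sub_smul_le (P k) ψ 0 m (fun j hj => hPj j hj.le)
      (ε := 0) (by simp)
    rw [smul_zero, sub_zero, sub_zero, add_zero] at h
    calc _ ≤ m * (C * ‖P k ψ - ψ‖) := h
      _ ≤ m * (C * (τ k * (‖z‖ + 1))) := by gcongr
      _ = B * (m * τ k) := by ring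
  have hsplit : (P k ^ m) g - g = (P k ^ m) (g - ψ) + ((P k ^ m) ψ - ψ) + (ψ - g) := by
    rw [map_sub]
    abel
  calc ‖(P k ^ m) g - g‖ ≤ ‖(P k ^ m) (g - ψ)‖ + ‖(P k ^ m) ψ - ψ‖ + ‖ψ - g‖ :=
        hsplit ▸ norm_add₃_le
    _ ≤ C * ‖g - ψ‖ + B * (m * τ k) + ‖g - ψ‖ := by
        rw [norm_sub_rev ψ]
        gcongr
        exact ((P k ^ m).le_opNorm _).trans
          (mul_le_mul_of_nonneg_right (hPj m le_rfl) (norm_nonneg _))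
    _ = (C + 1) * ‖g - ψ‖ + B * (m * τ k) := by ring
    _ ≤ (C + 1) * (ε / (2 * (C + 1))) + (B + 1) * (ε / (2 * (B + 1))) := by
        gcongr
        · linarith
        · exact hm.trans (min_le_right _ _)
    _ = ε := by field_simp; ring

theorem tendsto_pow_apply (hP : IsChernoffScheme P τ) (g : E) {d : ℕ → ℕ}
    (hd : Tendsto (fun k => (d k : ℝ) * τ k) atTop (𝓝 0)) :
    Tendsto (fun k => (P k ^ d k) g) atTop (𝓝 g) := by
  refine Metric.tendsto_nhds.2 fun ε hε => ?_
  obtain ⟨δ, hδ, h⟩ := hP.exists_eventually_norm_pow_apply_sub_le g (half_pos hε)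
  filter_upwards [h, hd.eventually (Iic_mem_nhds hδ)] with k hk hdk
  rw [dist_eq_norm]
  exact (hk _ hdk).trans_lt (half_lt_self hε)

theorem tendsto_pow_apply_sub_pow_apply (hP : IsChernoffScheme P τ) (g : E) {m n : ℕ → ℕ}
    {S : ℝ} (hm : ∀ k, (m k : ℝ) * τ k ≤ S) (hmn : ∀ᶠ k in atTop, m k ≤ n k)
    (hnm : Tendsto (fun k => ((n k : ℝ) - m k) * τ k) atTop (𝓝 0)) :
    Tendsto (fun k => (P k ^ n k) g - (P k ^ m k) g) atTop (𝓝 0) := by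
  obtain ⟨C, -, hC⟩ := hP.exists_norm_pow_le S
  have hd : Tendsto (fun k => ((n k - m k : ℕ) : ℝ) * τ k) atTop (𝓝 0) :=
    hnm.congr' (by filter_upwards [hmn] with k hk; rw [Nat.cast_sub hk])
  have := tendsto_apply_zero_of_norm_le (fun k => hC k _ (hm k))
    (tendsto_sub_nhds_zero_iff.2 (hP.tendsto_pow_apply g hd))
  refine this.congr' ?_
  filter_upwards [hmn] with k hk
  rw [pow_apply_sub_pow_apply _ hk]

theorem exists_tendsto_of_frequently [CompleteSpace E] (hP : IsChernoffScheme P τ) {g : E}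
    {s : ℝ} (hs : 0 ≤ s)
    (h : ∃ᶠ r in 𝓝[>] s, ∃ L, Tendsto (fun k => (P k ^ ⌊r / τ k⌋₊) g) atTop (𝓝 L)) :
    ∃ L, Tendsto (fun k => (P k ^ ⌊s / τ k⌋₊) g) atTop (𝓝 L) := by
  refine cauchySeq_tendsto_of_complete
    (cauchySeq_of_forall_eventually_dist_le fun ε hε => ?_)
  obtain ⟨C, hC0, hC⟩ := hP.exists_norm_pow_le s
  obtain ⟨δ, hδ, hgδ⟩ :=
    hP.exists_eventually_norm_pow_apply_sub_le g (show 0 < ε / (C + 1) by positivity)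
  obtain ⟨r, ⟨L, hL⟩, hsr, hrδ⟩ :=
    (h.and_eventually (Ioo_mem_nhdsGT (show s < s + δ by linarith))).exists
  refine ⟨_, hL.cauchySeq, ?_⟩
  filter_upwards [hgδ, hP.eventually_pos,
    hP.tendsto_zero.eventually (gt_mem_nhds (show 0 < s + δ - r by linarith))] with k hk hτ hτδ
  have hmn := Nat.floor_le_floor (div_le_div_of_nonneg_right hsr.le hτ.le)
  have hd := floor_div_sub_floor_div_mul_lt hτ hs hsr.le
  rw [dist_eq_norm, norm_sub_rev]
  calc _ ≤ C * (ε / (C + 1)) := (norm_pow_apply_sub_pow_apply_le _ hmn g).trans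
        (mul_le_mul (hC k _ (floor_div_mul_le hs _)) (hk _ (by linarith)) (norm_nonneg _) hC0)
    _ ≤ (C + 1) * (ε / (C + 1)) := by gcongr; linarith
    _ = ε := by field_simp

theorem exists_tendsto_of_mem_topologicalClosure [CompleteSpace E] (hP : IsChernoffScheme P τ)
    {Φ : Set E} {r : ℝ} (hr : 0 ≤ r)
    (hΦ : ∀ g ∈ Φ, ∃ L, Tendsto (fun k => (P k ^ ⌊r / τ k⌋₊) g) atTop (𝓝 L)) {g : E}
    (hg : g ∈ (Submodule.span ℝ Φ).topologicalClosure) :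
    ∃ L, Tendsto (fun k => (P k ^ ⌊r / τ k⌋₊) g) atTop (𝓝 L) := by
  obtain ⟨C, -, hC⟩ := hP.exists_norm_pow_le r
  exact Submodule.topologicalClosure_minimal (t := convergenceSubmodule fun k => P k ^ ⌊r / τ k⌋₊)
    _ (Submodule.span_le.2 hΦ)
    (isClosed_convergenceSubmodule fun k => hC k _ (floor_div_mul_le hr _)) hg

end IsChernoffScheme

variable {T : ℝ → E → E} {V : Set E}

namespace IsSchemeLimitOn

theorem apply_zero (hT : IsSchemeLimitOn P τ T V) {g : E} (hg : g ∈ V) : T 0 g = g :=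
  tendsto_nhds_unique (hT 0 le_rfl g hg) (by simp)

theorem norm_apply_sub_apply_le (hT : IsSchemeLimitOn P τ T V) {S C : ℝ}
    (hC : ∀ k (m : ℕ), (m : ℝ) * τ k ≤ S → ‖P k ^ m‖ ≤ C) {s : ℝ} (hs : 0 ≤ s) (hsS : s ≤ S)
    {g g' : E} (hg : g ∈ V) (hg' : g' ∈ V) : ‖T s g - T s g'‖ ≤ C * ‖g - g'‖ := by
  refine le_of_tendsto ((hT s hs g hg).sub (hT s hs g' hg')).norm (Eventually.of_forall fun k => ?_)
  rw [← map_sub]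
  exact ((P k ^ _).le_opNorm _).trans (mul_le_mul_of_nonneg_right
    (hC k _ ((floor_div_mul_le hs _).trans hsS)) (norm_nonneg _))

theorem apply_add (hT : IsSchemeLimitOn P τ T V) (hP : IsChernoffScheme P τ) {f : E} (hf : f ∈ V)
    {s l : ℝ} (hs : 0 ≤ s) (hl : 0 ≤ l) (hTs : T s f ∈ V) : T (s + l) f = T l (T s f) := by
  have hfloor : ∀ᶠ k in atTop, ⌊l / τ k⌋₊ + ⌊s / τ k⌋₊ ≤ ⌊(s + l) / τ k⌋₊ := by
    filter_upwards [hP.eventually_pos] with k hk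
    refine Nat.le_floor ?_
    push_cast
    rw [add_comm s, add_div]
    gcongr <;> exact Nat.floor_le (by positivity)
  have hsum := hP.tendsto_pow_apply_sub_pow_apply f
    (fun k => by push_cast; linarith [floor_div_mul_le hl (τ k), floor_div_mul_le hs (τ k)])
    hfloor (S := l + s) (by
      have h := ((tendsto_floor_div_mul hP.tendsto_step (add_nonneg hs hl)).sub
        (tendsto_floor_div_mul hP.tendsto_step hl)).sub (tendsto_floor_div_mul hP.tendsto_step hs)
      rw [show s + l - l - s = 0 by ring] at h
      exact h.congr fun k => by push_cast; ring)
  obtain ⟨C, -, hC⟩ := hP.exists_norm_pow_le l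
  have hshift := tendsto_apply_zero_of_norm_le (fun k => hC k _ (floor_div_mul_le hl (τ k)))
    (tendsto_sub_nhds_zero_iff.2 (hT s hs f hf))
  refine tendsto_nhds_unique ?_ (hT l hl _ hTs)
  have h := ((hT _ (add_nonneg hs hl) f hf).sub hsum).sub hshift
  rw [sub_zero, sub_zero] at h
  refine h.congr fun k => ?_
  rw [pow_add, mul_apply_eq_comp, map_sub]
  abel

theorem norm_sub_le_of_sub_lt (hT : IsSchemeLimitOn P τ T V) (hP : IsChernoffScheme P τ)
    {y : E} (hy : y ∈ V) {S C ε δ : ℝ} (hC : ∀ k (m : ℕ), (m : ℝ) * τ k ≤ S → ‖P k ^ m‖ ≤ C)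
    (hδ : ∀ᶠ k in atTop, ∀ m : ℕ, (m : ℝ) * τ k ≤ δ → ‖(P k ^ m) y - y‖ ≤ ε)
    {u v : ℝ} (hu : 0 ≤ u) (huv : u ≤ v) (huS : u ≤ S) (hvu : v - u < δ) :
    ‖T v y - T u y‖ ≤ C * ε := by
  refine le_of_tendsto ((hT v (hu.trans huv) y hy).sub (hT u hu y hy)).norm ?_
  filter_upwards [hδ, hP.eventually_pos,
    hP.tendsto_zero.eventually (gt_mem_nhds (sub_pos.2 hvu))] with k hk hτ hτδ
  have hmn := Nat.floor_le_floor (div_le_div_of_nonneg_right huv hτ.le)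
  have hPm := hC k _ ((floor_div_mul_le hu (τ k)).trans huS)
  exact (norm_pow_apply_sub_pow_apply_le _ hmn y).trans (mul_le_mul hPm
    (hk _ (by linarith [floor_div_sub_floor_div_mul_lt hτ hu huv])) (norm_nonneg _)
    ((norm_nonneg _).trans hPm))

theorem norm_sub_sub_smul_le_of_hasSchemeDeriv (hT : IsSchemeLimitOn P τ T V)
    (hP : IsChernoffScheme P τ) {y : E} (hy : y ∈ V) {S C ε δ : ℝ}
    (hC : ∀ k (m : ℕ), (m : ℝ) * τ k ≤ S → ‖P k ^ m‖ ≤ C) (hε : 0 < ε)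
    (hδ : ∀ᶠ k in atTop, ∀ m : ℕ, (m : ℝ) * τ k ≤ δ → ‖(P k ^ m) y - y‖ ≤ ε)
    {ψ z : E} (hψ : ψ ∈ V) (hψz : HasSchemeDeriv P τ ψ z)
    {u v : ℝ} (hu : 0 ≤ u) (huv : u ≤ v) (hvS : v ≤ S) (hvu : v - u < δ) :
    ‖T v ψ - T u ψ - (v - u) • T u y‖ ≤ C * (v - u) * (C * (‖z - y‖ + ε) + ε) := by
  have hv : 0 ≤ v := hu.trans huv
  have hstep := (tendsto_floor_div_mul hP.tendsto_step hv).sub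
    (tendsto_floor_div_mul hP.tendsto_step hu)
  refine le_of_tendsto_of_tendsto
    (((hT v hv ψ hψ).sub (hT u hu ψ hψ)).sub (hstep.smul (hT u hu y hy))).norm
    ((hstep.const_mul C).mul_const _) ?_
  filter_upwards [hδ, hP.eventually_pos, hP.tendsto_zero.eventually (gt_mem_nhds (sub_pos.2 hvu)),
    hψz.eventually_norm_sub_sub_smul_le hP.eventually_pos y hε] with k hk hτ hτδ hder
  set m := ⌊u / τ k⌋₊
  set n := ⌊v / τ k⌋₊
  have hmn : m ≤ n := Nat.floor_le_floor (div_le_div_of_nonneg_right huv hτ.le)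
  have hPj : ∀ j ≤ n, ‖P k ^ j‖ ≤ C := fun j hj =>
    hC k j (le_trans (by gcongr) ((floor_div_mul_le hv (τ k)).trans hvS))
  have hC0 : 0 ≤ C := (norm_nonneg _).trans (hPj 0 (Nat.zero_le _))
  have hduhamel := norm_pow_apply_sub_sub_smul_le (P k) ψ (τ k • y) (n - m) (ε := τ k * ε)
    (fun j hj => hPj j (by omega)) (fun j hj => by
      rw [map_smul, ← smul_sub, norm_smul, Real.norm_of_nonneg hτ.le]
      gcongr
      exact hk j ((mul_le_mul_of_nonneg_right (Nat.cast_le.2 hj.le) hτ.le).trans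
        (by linarith [floor_div_sub_floor_div_mul_lt hτ hu huv])))
  have hsplit : (P k ^ n) ψ - (P k ^ m) ψ - ((n : ℝ) * τ k - m * τ k) • (P k ^ m) y
      = (P k ^ m) ((P k ^ (n - m)) ψ - ψ - ((n - m : ℕ) : ℝ) • τ k • y) := by
    rw [pow_apply_sub_pow_apply _ hmn, Nat.cast_sub hmn]
    simp only [map_sub, map_smul, smul_smul, sub_mul]
  rw [hsplit]
  calc _ ≤ C * ‖(P k ^ (n - m)) ψ - ψ - ((n - m : ℕ) : ℝ) • τ k • y‖ :=
        ((P k ^ m).le_opNorm _).trans (mul_le_mul_of_nonneg_right (hPj m hmn) (norm_nonneg _))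
    _ ≤ C * ((n - m : ℕ) * (C * (τ k * (‖z - y‖ + ε)) + τ k * ε)) := by
        gcongr
        exact hduhamel.trans (by gcongr)
    _ = C * ((n : ℝ) * τ k - m * τ k) * (C * (‖z - y‖ + ε) + ε) := by
        rw [Nat.cast_sub hmn]
        ring


theorem norm_sub_sub_smul_le (hT : IsSchemeLimitOn P τ T V) (hP : IsChernoffScheme P τ)
    {g y : E} (hg : g ∈ V) (hy : y ∈ V) (hgy : (g, y) ∈ closure (schemeGraphOn P τ V))
    {S C ε δ : ℝ} (hC : ∀ k (m : ℕ), (m : ℝ) * τ k ≤ S → ‖P k ^ m‖ ≤ C) (hε : 0 < ε)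
    (hδ : ∀ᶠ k in atTop, ∀ m : ℕ, (m : ℝ) * τ k ≤ δ → ‖(P k ^ m) y - y‖ ≤ ε)
    {u v : ℝ} (hu : 0 ≤ u) (huv : u ≤ v) (hvS : v ≤ S) (hvu : v - u < δ) :
    ‖T v g - T u g - (v - u) • T u y‖ ≤ C * (v - u) * (C * ε + ε) := by
  obtain ⟨p, hpV, hp⟩ := mem_closure_iff_seq_limit.1 hgy
  have hbound : ∀ n, ‖T v g - T u g - (v - u) • T u y‖
      ≤ 2 * C * ‖g - (p n).1‖ + C * (v - u) * (C * (‖(p n).2 - y‖ + ε) + ε) := by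
    intro n
    obtain ⟨hψ, hψz⟩ := hpV n
    have h1 := hT.norm_apply_sub_apply_le hC (hu.trans huv) hvS hg hψ
    have h2 := hT.norm_apply_sub_apply_le hC hu (huv.trans hvS) hg hψ
    have h3 := hT.norm_sub_sub_smul_le_of_hasSchemeDeriv hP hy hC hε hδ hψ hψz hu huv hvS hvu
    calc _ = ‖(T v g - T v (p n).1) - (T u g - T u (p n).1)
          + (T v (p n).1 - T u (p n).1 - (v - u) • T u y)‖ := by congr 1; abel
      _ ≤ ‖T v g - T v (p n).1‖ + ‖T u g - T u (p n).1‖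
          + ‖T v (p n).1 - T u (p n).1 - (v - u) • T u y‖ :=
        (norm_add_le _ _).trans (add_le_add (norm_sub_le _ _) le_rfl)
      _ ≤ _ := by linarith
  have hlim : Tendsto
      (fun n => 2 * C * ‖g - (p n).1‖ + C * (v - u) * (C * (‖(p n).2 - y‖ + ε) + ε)) atTop
      (𝓝 (2 * C * ‖g - g‖ + C * (v - u) * (C * (‖y - y‖ + ε) + ε))) :=
    (((tendsto_const_nhds (x := g)).sub hp.fst_nhds).norm.const_mul _).add
      (((((hp.snd_nhds.sub tendsto_const_nhds).norm.add_const ε).const_mul C).add_const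
        ε).const_mul _)
  simpa using ge_of_tendsto' hlim hbound

theorem hasDerivWithinAt (hT : IsSchemeLimitOn P τ T V) (hP : IsChernoffScheme P τ) {f y : E}
    (hf : f ∈ V) (hy : y ∈ V) (hfy : (f, y) ∈ closure (schemeGraphOn P τ V)) {s : ℝ}
    (hs : 0 ≤ s) : HasDerivWithinAt (fun r => T r f) (T s y) (Ici 0) s := by
  rw [hasDerivWithinAt_iff_isLittleO, Asymptotics.isLittleO_iff]
  intro c hc
  obtain ⟨C, hC0, hC⟩ := hP.exists_norm_pow_le (s + 1)
  set ε := c / (C + 1) ^ 2 with hε_def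
  have hε : 0 < ε := by positivity
  have hεc : C * (C * ε + ε) + C * ε ≤ c := by
    have : (C + 1) ^ 2 * ε = c := by rw [hε_def]; field_simp
    nlinarith
  obtain ⟨δ, hδ, hyδ⟩ := hP.exists_eventually_norm_pow_apply_sub_le y hε
  have hδ1 : 0 < min δ 1 := by positivity
  filter_upwards [self_mem_nhdsWithin, nhdsWithin_le_nhds
    (Ioo_mem_nhds (sub_lt_self s hδ1) (lt_add_of_pos_right s hδ1))] with r (hr : 0 ≤ r) hrs
  obtain ⟨hr₁, hr₂⟩ := hrs
  have hmin := min_le_left δ 1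
  have hmin' := min_le_right δ 1
  rcases le_total s r with hsr | hrs
  · have h := hT.norm_sub_sub_smul_le hP hf hy hfy hC hε hyδ hs hsr (by linarith) (by linarith)
    rw [Real.norm_of_nonneg (sub_nonneg.2 hsr)]
    calc _ ≤ C * (r - s) * (C * ε + ε) := h
      _ = (r - s) * (C * (C * ε + ε)) := by ring
      _ ≤ (r - s) * c :=
        mul_le_mul_of_nonneg_left (by nlinarith [mul_nonneg hC0 hε.le]) (sub_nonneg.2 hsr)
      _ = c * (r - s) := by ring
  · have h1 := hT.norm_sub_sub_smul_le hP hf hy hfy hC hε hyδ hr hrs (by linarith) (by linarith)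
    have h2 := hT.norm_sub_le_of_sub_lt hP hy hC hyδ hr hrs (by linarith) (by linarith)
    have hsplit : T r f - T s f - (r - s) • T s y
        = -((T s f - T r f - (s - r) • T r y) + (s - r) • (T r y - T s y)) := by module
    rw [Real.norm_of_nonpos (sub_nonpos.2 hrs), hsplit, norm_neg]
    calc _ ≤ ‖T s f - T r f - (s - r) • T r y‖ + ‖(s - r) • (T r y - T s y)‖ := norm_add_le _ _
      _ ≤ C * (s - r) * (C * ε + ε) + (s - r) * (C * ε) := by
        rw [norm_smul, Real.norm_of_nonneg (sub_nonneg.2 hrs), norm_sub_rev (T r y)]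
        gcongr
      _ = (s - r) * (C * (C * ε + ε) + C * ε) := by ring
      _ ≤ (s - r) * c := mul_le_mul_of_nonneg_left hεc (sub_nonneg.2 hrs)
      _ = c * -(r - s) := by ring

theorem hasDerivWithinAt_of_mem_closure (hT : IsSchemeLimitOn P τ T V)
    (hP : IsChernoffScheme P τ) {f z y : E} (hf : f ∈ V) (hz : z ∈ V)
    (hfz : HasSchemeDeriv P τ f z) {s : ℝ} (hs : 0 ≤ s) (hTs : T s f ∈ V) (hy : y ∈ V)
    (hcl : (T s f, y) ∈ closure (schemeGraphOn P τ V)) :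
    HasDerivWithinAt (fun r => T r f) y (Ici 0) s := by
  have hderiv := hT.hasDerivWithinAt hP hf hz (subset_closure ⟨hf, hfz⟩) hs
  -- on `[s, ∞)` we have `T r f = T (r - s) (T s f)`, whose derivative at `s` is `T 0 y = y`
  have hright : HasDerivWithinAt (fun r => T r f) y (Ici s) s := by
    have h := (hT.hasDerivWithinAt hP hTs hy hcl le_rfl).scomp_of_eq s
      ((hasDerivWithinAt_id s (Ici s)).sub_const s)
      (fun r (hr : s ≤ r) => show 0 ≤ id r - s from sub_nonneg.2 hr) (sub_self s).symm
    rw [hT.apply_zero hy, one_smul] at h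
    refine h.congr_of_mem (fun r hr => ?_) self_mem_Ici
    rw [Function.comp_apply, id, ← hT.apply_add hP hf hs (sub_nonneg.2 hr) hTs, add_sub_cancel]
  rwa [(uniqueDiffWithinAt_Ici s).eq_deriv _ (hderiv.mono (Ici_subset_Ici.2 hs)) hright] at hderiv

end IsSchemeLimitOn


theorem DerivAtZero.hasSchemeDeriv {F : ℝ → (E →L[ℝ] E)} (hF0 : F 0 = 1)
    (hτ : Tendsto τ atTop (𝓝[>] 0)) {ψ y : E} (h : DerivAtZero F ψ y) :
    HasSchemeDeriv (fun k => F (τ k)) τ ψ y := by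
  simpa [HasSchemeDeriv, hF0, Function.comp_def] using h.comp hτ

theorem mem_closure_schemeGraphOn_of_derivAtZero {F : ℝ → (E →L[ℝ] E)} (hF0 : F 0 = 1)
    (hτ : Tendsto τ atTop (𝓝[>] 0)) {V : Set E} {f y : E} {fn yn : ℕ → E}
    (hn : ∀ n, fn n ∈ V ∧ DerivAtZero F (fn n) (yn n)) (hf : Tendsto fn atTop (𝓝 f))
    (hy : Tendsto yn atTop (𝓝 y)) : (f, y) ∈ closure (schemeGraphOn (fun k => F (τ k)) τ V) :=
  mem_closure_of_tendsto (hf.prodMk_nhds hy)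
    (Eventually.of_forall fun n => ⟨(hn n).1, (hn n).2.hasSchemeDeriv hF0 hτ⟩)

theorem MemF.isChernoffScheme {F : ℝ → (E →L[ℝ] E)} (hF : MemF F) {t : ℝ} (ht : 0 < t)
    {gk : ℕ → ℕ} (hgk : StrictMono gk) :
    IsChernoffScheme (fun k => F (t / gk k)) (fun k => t / gk k) := by
  obtain ⟨M, hM, a, hF0, hbound, hdense⟩ := hF
  have hgk_top := (tendsto_natCast_atTop_atTop (R := ℝ)).comp hgk.tendsto_atTop
  have hτ : Tendsto (fun k => t / (gk k : ℝ)) atTop (𝓝[>] 0) :=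
    tendsto_nhdsWithin_iff.2 ⟨tendsto_const_nhds.div_atTop hgk_top,
      (hgk_top.eventually_gt_atTop 0).mono fun k hk => div_pos ht hk⟩
  have hD : {ψ | ∃ y, DerivAtZero F ψ y}
      ⊆ {ψ | ∃ y, HasSchemeDeriv (fun k => F (t / gk k)) (fun k => t / gk k) ψ y} :=
    fun ψ ⟨y, h⟩ => ⟨y, h.hasSchemeDeriv hF0 hτ⟩
  refine ⟨hτ, fun S => ?_, hdense.mono hD⟩
  refine ⟨M * Real.exp (|a| * S), by positivity, fun k m hm => ?_⟩
  have hS : 0 ≤ S := (by positivity : 0 ≤ (m : ℝ) * (t / gk k)).trans hm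
  have hone : ‖(1 : E →L[ℝ] E)‖ ≤ M * Real.exp (|a| * S) :=
    ContinuousLinearMap.norm_id_le.trans
      (by nlinarith [Real.one_le_exp (by positivity : 0 ≤ |a| * S)])
  rcases Nat.eq_zero_or_pos m with rfl | hm0
  · simpa using hone
  rcases Nat.eq_zero_or_pos (gk k) with hg | hg
  · simpa [hg, hF0] using hone
  refine (hbound _ _ hg hm0 t ht.le).trans
    (mul_le_mul_of_nonneg_left (Real.exp_le_exp.2 ?_) (by linarith))
  calc a * m * t / gk k = a * (m * (t / gk k)) := by ring
    _ ≤ |a| * (m * (t / gk k)) := by gcongr; exact le_abs_self a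
    _ ≤ |a| * S := by gcongr

end Scheme

/-- Lemma 7: extension of the norm limits from `Φ` and nonnegative rational
times to the closed span of `Φ` and all real `s ≥ 0`, together with properties (a)–(c). -/
theorem chernoff_lemma7 (F : ℝ → (X →L[ℝ] X)) (hF : MemF F)
    (t : ℝ) (ht : 0 < t) (Φ : Set X)
    (gk : ℕ → ℕ) (hgk : StrictMono gk)
    (hlim : ∀ g ∈ Φ, ∀ q : ℚ, 0 ≤ (q : ℝ) →
      ∃ L : X, Tendsto (fun k : ℕ => ((F (t / (gk k))) ^ ⌊(gk k : ℝ) * (q : ℝ)⌋₊) g)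
        atTop (𝓝 L)) :
    -- the limit exists on the closed span for all real `s ≥ 0`
    (∀ g ∈ closedSpan Φ, ∀ s : ℝ, 0 ≤ s →
      ∃ L : X, Tendsto (fun k : ℕ => ((F (t / (gk k))) ^ ⌊(gk k : ℝ) * s⌋₊) g) atTop (𝓝 L)) ∧
    -- properties of the limit family `T_s`
    (∀ T : ℝ → X → X,
      (∀ s : ℝ, 0 ≤ s → ∀ g ∈ closedSpan Φ,
        Tendsto (fun k : ℕ => ((F (t / (gk k))) ^ ⌊(gk k : ℝ) * (s / t)⌋₊) g)
          atTop (𝓝 (T s g))) →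
      -- (a) semigroup-type identity
      (∀ f ∈ closedSpan Φ, ∀ s : ℝ, 0 ≤ s → T s f ∈ closedSpan Φ →
        ∀ l : ℝ, 0 < l → T (s + l) f = T l (T s f)) ∧
      -- (b) differentiability along an approximating sequence
      (∀ f ∈ closedSpan Φ, ∀ y : X, y ∈ closedSpan Φ →
        (∃ fn yn : ℕ → X,
          (∀ n : ℕ, fn n ∈ closedSpan Φ ∧ DerivAtZero F (fn n) (yn n)) ∧
          Tendsto fn atTop (𝓝 f) ∧ Tendsto yn atTop (𝓝 y)) →
        ∀ s : ℝ, 0 ≤ s →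
          HasDerivWithinAt (fun r => T r f) (T s y) (Set.Ici (0 : ℝ)) s) ∧
      -- (c) the derivative hits the closure of `F'(0)` at `T_s f`
      (∀ f ∈ closedSpan Φ, ∀ yf : X, DerivAtZero F f yf → yf ∈ closedSpan Φ →
        ∀ s : ℝ, 0 ≤ s → T s f ∈ closedSpan Φ →
        ∀ y' : X, y' ∈ closedSpan Φ →
        (∃ fn yn : ℕ → X,
          (∀ n : ℕ, fn n ∈ closedSpan Φ ∧ DerivAtZero F (fn n) (yn n)) ∧
          Tendsto fn atTop (𝓝 (T s f)) ∧ Tendsto yn atTop (𝓝 y')) →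
        HasDerivWithinAt (fun r => T r f) y' (Set.Ici (0 : ℝ)) s)) := by
  have hP := hF.isChernoffScheme ht hgk
  obtain ⟨-, -, -, hF0, -⟩ := hF
  have hunit : ∀ (n : ℕ) (s : ℝ), (n : ℝ) * (s / t) = s / (t / n) := fun n s => by
    rw [div_div_eq_mul_div]; ring
  -- exponents `⌊gₖ s⌋₊` in the hypothesis and the first claim belong to time `s * t`
  have hscale : ∀ (n : ℕ) (s : ℝ), (n : ℝ) * s = s * t / (t / n) := fun n s => by
    rw [← hunit, mul_div_cancel_right₀ _ ht.ne']
  refine ⟨fun g hg s hs => ?_, fun T hT => ?_⟩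
  · simp only [hscale]
    refine hP.exists_tendsto_of_frequently (by positivity)
      ((nhdsGT_basis _).frequently_iff.2 fun i hi => ?_)
    obtain ⟨q, hsq, hqi⟩ := exists_rat_btwn ((lt_div_iff₀ ht).2 hi)
    have hq : 0 ≤ (q : ℝ) := hs.trans hsq.le
    refine ⟨q * t, ⟨by gcongr, (lt_div_iff₀ ht).1 hqi⟩,
      hP.exists_tendsto_of_mem_topologicalClosure (by positivity) (fun g hg => ?_) hg⟩
    simpa only [hscale] using hlim g hg q hq
  · have hT' : IsSchemeLimitOn _ _ T (closedSpan Φ) := fun s hs g hg => by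
      simpa only [hunit] using hT s hs g hg
    have hτ := hP.tendsto_step
    exact ⟨fun f hf s hs hTs l hl => hT'.apply_add hP hf hs hl.le hTs,
      fun f hf y hy ⟨fn, yn, hn, hfn, hyn⟩ s hs => hT'.hasDerivWithinAt hP hf hy
        (mem_closure_schemeGraphOn_of_derivAtZero hF0 hτ hn hfn hyn) hs,
      fun f hf yf hfyf hyf s hs hTs y' hy' ⟨fn, yn, hn, hfn, hyn⟩ =>
        hT'.hasDerivWithinAt_of_mem_closure hP hf hyf (hfyf.hasSchemeDeriv hF0 hτ) hs hTs hy'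
          (mem_closure_schemeGraphOn_of_derivAtZero hF0 hτ hn hfn hyn)⟩
end
end
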